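/- arXiv:2408.05550 — 6 statements merged into one kernel-verified Lean document; each statement's English description precedes it below -/
import Mathlib

section
/- Let (A,d) be a nonzero dg-ring such that its ring of cycles ker(d) is a gr-division ring, i.e. every nonzero homogeneous element of ker(d) is invertible in ker(d). Then (A,d) is a dg-division ring: the only dg-left ideals of (A,d) are 0 and A, and the only dg-right ideals of (A,d) are 0 and A. -/
/-- The data of a differential making a `ℤ`-graded ring a dg-ring. -/
structure DGRingData {A : Type*} [Ring A] (𝒜 : ℤ → AddSubgroup A) : Type _ where
  d : A →+ A
  d_mem : ∀ ⦃i : ℤ⦄ ⦃a : A⦄, a ∈ 𝒜 i → d a ∈ 𝒜 (i + 1)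
  d_sq : ∀ a : A, d (d a) = 0
  leibniz : ∀ ⦃i : ℤ⦄ ⦃a : A⦄, a ∈ 𝒜 i → ∀ b : A,
    d (a * b) = d a * b + (((-1 : ℤˣ) ^ i : ℤˣ) : ℤ) • (a * d b)

variable {A : Type*} [Ring A] (𝒜 : ℤ → AddSubgroup A) [GradedRing 𝒜] (D : DGRingData 𝒜)

/-- A dg-left ideal: a graded, `d`-stable left ideal, as an additive subgroup. -/
def IsDGLeftIdeal (I : AddSubgroup A) : Prop :=
  (∀ a : A, ∀ x ∈ I, a * x ∈ I) ∧
  (∀ x ∈ I, ∀ i : ℤ, GradedRing.proj 𝒜 i x ∈ I) ∧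
  (∀ x ∈ I, D.d x ∈ I)

/-- A dg-right ideal: a graded, `d`-stable right ideal, as an additive subgroup. -/
def IsDGRightIdeal (I : AddSubgroup A) : Prop :=
  (∀ a : A, ∀ x ∈ I, x * a ∈ I) ∧
  (∀ x ∈ I, ∀ i : ℤ, GradedRing.proj 𝒜 i x ∈ I) ∧
  (∀ x ∈ I, D.d x ∈ I)

/-- `ker d` is a gr-division ring: it is nonzero and every nonzero homogeneous cycle
is invertible within `ker d`. -/
def KerIsGrDivisionRing : Prop :=
  (∃ x : A, D.d x = 0 ∧ x ≠ 0) ∧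
  ∀ (i : ℤ) (a : A), a ∈ 𝒜 i → D.d a = 0 → a ≠ 0 →
    ∃ b : A, D.d b = 0 ∧ a * b = 1 ∧ b * a = 1

/-- Condition (REG): a homogeneous cycle is left regular in `ker d` iff it is right
regular in `ker d`. -/
def REG : Prop :=
  ∀ (i : ℤ) (u : A), u ∈ 𝒜 i → D.d u = 0 →
    ((∀ x : A, D.d x = 0 → u * x = 0 → x = 0) ↔
      (∀ x : A, D.d x = 0 → x * u = 0 → x = 0))

/-- if the ring of cycles of a nonzero dg-ring is a gr-division ring, then
the dg-ring is a dg-division ring: all dg-left ideals and dg-right ideals are trivial. -/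
theorem stmt_0 {A : Type*} [Ring A] [Nontrivial A] (𝒜 : ℤ → AddSubgroup A) [GradedRing 𝒜]
    (D : DGRingData 𝒜) (hdiv : KerIsGrDivisionRing 𝒜 D) :
    (∀ I : AddSubgroup A, IsDGLeftIdeal 𝒜 D I → I = ⊥ ∨ I = ⊤) ∧
    (∀ I : AddSubgroup A, IsDGRightIdeal 𝒜 D I → I = ⊥ ∨ I = ⊤) := by
  classical
  obtain ⟨-, hinv⟩ := hdiv
  -- key: any nonzero graded d-stable subgroup contains a two-sided invertible element
  have key : ∀ I : AddSubgroup A,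
      (∀ x ∈ I, ∀ i : ℤ, GradedRing.proj 𝒜 i x ∈ I) →
      (∀ x ∈ I, D.d x ∈ I) → I ≠ ⊥ →
      ∃ a b : A, a ∈ I ∧ a * b = 1 ∧ b * a = 1 := by
    intro I hproj hd hI
    obtain ⟨x, hxI, hx0⟩ : ∃ x ∈ I, x ≠ 0 := by
      by_contra h
      push_neg at h
      exact hI (by ext y; simpa [AddSubgroup.mem_bot] using
        ⟨fun hy => h y hy, fun hy => hy ▸ I.zero_mem⟩)
    obtain ⟨i, hi⟩ : ∃ i : ℤ, GradedRing.proj 𝒜 i x ≠ 0 := by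
      by_contra h
      push_neg at h
      apply hx0
      have hsum := DirectSum.sum_support_decompose 𝒜 x
      have : ∀ j : ℤ, ((DirectSum.decompose 𝒜 x j : 𝒜 j) : A) = 0 := by
        intro j; simpa [GradedRing.proj_apply] using h j
      rw [← hsum]
      exact Finset.sum_eq_zero fun j _ => this j
    set a := GradedRing.proj 𝒜 i x with ha
    have haI : a ∈ I := hproj x hxI i
    have hamem : a ∈ 𝒜 i := by
      rw [ha, GradedRing.proj_apply]; exact SetLike.coe_mem _
    by_cases hda : D.d a = 0
    · obtain ⟨b, -, hab, hba⟩ := hinv i a hamem hda hi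
      exact ⟨a, b, haI, hab, hba⟩
    · have hdaI : D.d a ∈ I := hd a haI
      have hdamem : D.d a ∈ 𝒜 (i + 1) := D.d_mem hamem
      obtain ⟨b, -, hab, hba⟩ := hinv (i + 1) (D.d a) hdamem (D.d_sq a) hda
      exact ⟨D.d a, b, hdaI, hab, hba⟩
  constructor
  · intro I ⟨hmul, hproj, hd⟩
    by_cases h : I = ⊥
    · exact Or.inl h
    · right
      obtain ⟨a, b, haI, hab, hba⟩ := key I hproj hd h
      have h1 : (1 : A) ∈ I := hba ▸ hmul b a haI
      rw [AddSubgroup.eq_top_iff']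
      intro y
      simpa using hmul y 1 h1
  · intro I ⟨hmul, hproj, hd⟩
    by_cases h : I = ⊥
    · exact Or.inl h
    · right
      obtain ⟨a, b, haI, hab, hba⟩ := key I hproj hd h
      have h1 : (1 : A) ∈ I := hab ▸ hmul b a haI
      rw [AddSubgroup.eq_top_iff']
      intro y
      simpa using hmul y 1 h1
end

section
/- Let (A,d) be a nonzero dg-ring whose only dg-left ideals are 0 and A, and suppose ker(d) satisfies condition (REG). Then ker(d) is a gr-division ring: every nonzero homogeneous element of ker(d) is invertible in ker(d). -/
variable {A : Type*} [Ring A] (𝒜 : ℤ → AddSubgroup A) [GradedRing 𝒜] (D : DGRingData 𝒜)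

/-- If `a` is a cycle, then `d (c * a) = d c * a` for any `c`. -/
lemma d_mul_cycle {A : Type*} [Ring A] (𝒜 : ℤ → AddSubgroup A) [GradedRing 𝒜]
    (D : DGRingData 𝒜) {a : A} (hda : D.d a = 0) (c : A) :
    D.d (c * a) = D.d c * a := by
  classical
  conv_lhs => rw [← DirectSum.sum_support_decompose 𝒜 c]
  conv_rhs => rw [← DirectSum.sum_support_decompose 𝒜 c]
  rw [Finset.sum_mul, map_sum, map_sum, Finset.sum_mul]
  refine Finset.sum_congr rfl fun j _ => ?_
  rw [D.leibniz (DirectSum.decompose 𝒜 c j).2 a, hda, mul_zero, smul_zero, add_zero]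

/-- Projection of a product with a homogeneous right factor. -/
lemma proj_mul_homog {A : Type*} [Ring A] (𝒜 : ℤ → AddSubgroup A) [GradedRing 𝒜]
    {a : A} {k : ℤ} (ha : a ∈ 𝒜 k) (c : A) (n : ℤ) :
    GradedRing.proj 𝒜 n (c * a) = GradedRing.proj 𝒜 (n - k) c * a := by
  have h1 : DirectSum.decompose 𝒜 (c * a)
      = DirectSum.decompose 𝒜 c * DirectSum.of (fun i => 𝒜 i) k ⟨a, ha⟩ := by
    rw [DirectSum.decompose_mul]
    congr 1
    exact DirectSum.decompose_coe 𝒜 (⟨a, ha⟩ : 𝒜 k)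
  rw [GradedRing.proj_apply, GradedRing.proj_apply, h1]
  have h2 := DirectSum.coe_mul_of_apply_add (A := 𝒜) (DirectSum.decompose 𝒜 c)
    (⟨a, ha⟩ : 𝒜 k) (n - k)
  rw [sub_add_cancel] at h2
  exact h2

/-- if a nonzero dg-ring has only trivial dg-left ideals and `ker d`
satisfies condition (REG), then `ker d` is a gr-division ring. -/
theorem stmt_1 {A : Type*} [Ring A] [Nontrivial A] (𝒜 : ℤ → AddSubgroup A) [GradedRing 𝒜]
    (D : DGRingData 𝒜)
    (hleft : ∀ I : AddSubgroup A, IsDGLeftIdeal 𝒜 D I → I = ⊥ ∨ I = ⊤)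
    (hreg : REG 𝒜 D) :
    KerIsGrDivisionRing 𝒜 D := by
  have d1 : D.d 1 = 0 := by
    have h := D.leibniz (SetLike.one_mem_graded 𝒜) 1
    simp only [one_mul, mul_one, zpow_zero, Units.val_one, one_smul] at h
    exact (left_eq_add.mp h)
  refine ⟨⟨1, d1, one_ne_zero⟩, fun i a ha hda hane => ?_⟩
  let I : AddSubgroup A :=
    { carrier := {x | ∃ c : A, c * a = x}
      add_mem' := by rintro x y ⟨c, rfl⟩ ⟨c', rfl⟩; exact ⟨c + c', add_mul c c' a⟩
      zero_mem' := ⟨0, zero_mul a⟩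
      neg_mem' := by rintro x ⟨c, rfl⟩; exact ⟨-c, neg_mul c a⟩ }
  have hI : IsDGLeftIdeal 𝒜 D I := by
    refine ⟨?_, ?_, ?_⟩
    · rintro r x ⟨c, rfl⟩; exact ⟨r * c, mul_assoc r c a⟩
    · rintro x ⟨c, rfl⟩ n
      exact ⟨GradedRing.proj 𝒜 (n - i) c, (proj_mul_homog 𝒜 ha c n).symm⟩
    · rintro x ⟨c, rfl⟩; exact ⟨D.d c, (d_mul_cycle 𝒜 D hda c).symm⟩
  have hItop : I = ⊤ := by
    refine (hleft I hI).resolve_left fun h => ?_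
    have haI : a ∈ I := ⟨1, one_mul a⟩
    rw [h] at haI
    exact hane (AddSubgroup.mem_bot.mp haI)
  obtain ⟨b, hb⟩ : ∃ c : A, c * a = 1 := by
    have : (1 : A) ∈ I := hItop ▸ AddSubgroup.mem_top 1
    exact this
  have hlr : ∀ x : A, D.d x = 0 → a * x = 0 → x = 0 := by
    intro x _ hax
    calc x = b * a * x := by rw [hb, one_mul]
    _ = b * (a * x) := mul_assoc b a x
    _ = 0 := by rw [hax, mul_zero]
  have hrr := (hreg i a ha hda).mp hlr
  have hdb : D.d b = 0 := by
    refine hrr (D.d b) (D.d_sq b) ?_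
    rw [← d_mul_cycle 𝒜 D hda b, hb, d1]
  have hab : a * b = 1 := by
    have hcyc : D.d (a * b - 1) = 0 := by
      rw [map_sub, d1, sub_zero, D.leibniz ha b, hda, hdb, zero_mul, mul_zero,
        smul_zero, add_zero]
    have hmul : (a * b - 1) * a = 0 := by
      rw [sub_mul, one_mul, mul_assoc, hb, mul_one, sub_self]
    exact sub_eq_zero.mp (hrr _ hcyc hmul)
  exact ⟨b, hdb, hab, hb⟩
end

section
/- Let (A,d) be a nonzero dg-ring such that ker(d) satisfies condition (REG). Then the following statements are equivalent: (i) the only dg-left ideals of (A,d) are 0 and A; (ii) the only dg-right ideals of (A,d) are 0 and A; (iii) every nonzero homogeneous element of ker(d) is invertible in ker(d), i.e. ker(d) is a gr-division ring. -/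
variable {A : Type*} [Ring A] (𝒜 : ℤ → AddSubgroup A) [GradedRing 𝒜] (D : DGRingData 𝒜)

/- ---------- auxiliary lemmas ---------- -/

lemma proj_mul_right' {i : ℤ} {b : A} (hb : b ∈ 𝒜 i) (x : A) (j : ℤ) :
    GradedRing.proj 𝒜 (j + i) (x * b) = GradedRing.proj 𝒜 j x * b := by
  lift b to 𝒜 i using hb
  rw [GradedRing.proj_apply, GradedRing.proj_apply, DirectSum.decompose_mul,
    DirectSum.decompose_coe, DirectSum.coe_mul_of_apply_add]

lemma proj_mul_left' {i : ℤ} {a : A} (ha : a ∈ 𝒜 i) (x : A) (j : ℤ) :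
    GradedRing.proj 𝒜 (i + j) (a * x) = a * GradedRing.proj 𝒜 j x := by
  lift a to 𝒜 i using ha
  rw [GradedRing.proj_apply, GradedRing.proj_apply, DirectSum.decompose_mul,
    DirectSum.decompose_coe, DirectSum.coe_of_mul_apply_add]

lemma d_one' : D.d (1 : A) = 0 := by
  have h := D.leibniz (SetLike.one_mem_graded 𝒜) 1
  simp only [one_mul, mul_one, zpow_zero, Units.val_one, one_smul] at h
  exact (left_eq_add.mp h)

lemma d_mul_cycle_s3 {i : ℤ} {a : A} (ha : a ∈ 𝒜 i) (hda : D.d a = 0) (x : A) :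
    D.d (x * a) = D.d x * a := by
  classical
  conv_lhs => rw [← DirectSum.sum_support_decompose 𝒜 x]
  conv_rhs => rw [← DirectSum.sum_support_decompose 𝒜 x]
  rw [Finset.sum_mul, map_sum, map_sum, Finset.sum_mul]
  refine Finset.sum_congr rfl fun j _ => ?_
  rw [D.leibniz (SetLike.coe_mem _) a, hda, mul_zero, smul_zero, add_zero]

lemma exists_proj_ne_zero {x : A} (hx : x ≠ 0) : ∃ j : ℤ, GradedRing.proj 𝒜 j x ≠ 0 := by
  classical
  by_contra h
  push_neg at h
  apply hx
  conv_lhs => rw [← DirectSum.sum_support_decompose 𝒜 x]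
  exact Finset.sum_eq_zero fun j _ => h j

lemma proj_mem (j : ℤ) (x : A) : GradedRing.proj 𝒜 j x ∈ 𝒜 j := by
  rw [GradedRing.proj_apply]; exact SetLike.coe_mem _

/-- (iii) implies (i). -/
lemma div_to_left_simple
    (hdiv : ∀ (i : ℤ) (a : A), a ∈ 𝒜 i → D.d a = 0 → a ≠ 0 →
      ∃ b : A, D.d b = 0 ∧ a * b = 1 ∧ b * a = 1) :
    ∀ I : AddSubgroup A, IsDGLeftIdeal 𝒜 D I → I = ⊥ ∨ I = ⊤ := by
  intro I hI
  by_cases hbot : I = ⊥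
  · exact Or.inl hbot
  right
  obtain ⟨x, hxI, hx0⟩ : ∃ x ∈ I, x ≠ 0 := by
    by_contra h
    push_neg at h
    exact hbot (AddSubgroup.eq_bot_iff_forall _ |>.2 h)
  obtain ⟨j, hj⟩ := exists_proj_ne_zero 𝒜 hx0
  set a := GradedRing.proj 𝒜 j x with hadef
  have haI : a ∈ I := hI.2.1 x hxI j
  have ha : a ∈ 𝒜 j := proj_mem 𝒜 j x
  have hone : (1 : A) ∈ I := by
    by_cases hda : D.d a = 0
    · obtain ⟨b, _, _, hba⟩ := hdiv j a ha hda hj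
      rw [← hba]; exact hI.1 b a haI
    · obtain ⟨b, _, _, hba⟩ := hdiv (j + 1) (D.d a) (D.d_mem ha) (D.d_sq a) hda
      rw [← hba]; exact hI.1 b (D.d a) (hI.2.2 a haI)
  refine AddSubgroup.eq_top_iff' _ |>.2 fun y => ?_
  have := hI.1 y 1 hone
  rwa [mul_one] at this

/-- (iii) implies (ii). -/
lemma div_to_right_simple
    (hdiv : ∀ (i : ℤ) (a : A), a ∈ 𝒜 i → D.d a = 0 → a ≠ 0 →
      ∃ b : A, D.d b = 0 ∧ a * b = 1 ∧ b * a = 1) :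
    ∀ I : AddSubgroup A, IsDGRightIdeal 𝒜 D I → I = ⊥ ∨ I = ⊤ := by
  intro I hI
  by_cases hbot : I = ⊥
  · exact Or.inl hbot
  right
  obtain ⟨x, hxI, hx0⟩ : ∃ x ∈ I, x ≠ 0 := by
    by_contra h
    push_neg at h
    exact hbot (AddSubgroup.eq_bot_iff_forall _ |>.2 h)
  obtain ⟨j, hj⟩ := exists_proj_ne_zero 𝒜 hx0
  set a := GradedRing.proj 𝒜 j x with hadef
  have haI : a ∈ I := hI.2.1 x hxI j
  have ha : a ∈ 𝒜 j := proj_mem 𝒜 j x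
  have hone : (1 : A) ∈ I := by
    by_cases hda : D.d a = 0
    · obtain ⟨b, _, hab, _⟩ := hdiv j a ha hda hj
      rw [← hab]; exact hI.1 b a haI
    · obtain ⟨b, _, hab, _⟩ := hdiv (j + 1) (D.d a) (D.d_mem ha) (D.d_sq a) hda
      rw [← hab]; exact hI.1 b (D.d a) (hI.2.2 a haI)
  refine AddSubgroup.eq_top_iff' _ |>.2 fun y => ?_
  have := hI.1 y 1 hone
  rwa [one_mul] at this

/-- (i) implies (iii). -/
lemma left_simple_to_div (hreg : REG 𝒜 D)
    (hs : ∀ I : AddSubgroup A, IsDGLeftIdeal 𝒜 D I → I = ⊥ ∨ I = ⊤) :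
    ∀ (i : ℤ) (a : A), a ∈ 𝒜 i → D.d a = 0 → a ≠ 0 →
      ∃ b : A, D.d b = 0 ∧ a * b = 1 ∧ b * a = 1 := by
  intro i a ha hda ha0
  -- the dg-left ideal A·a
  set I : AddSubgroup A := (AddMonoidHom.mulRight a).range with hIdef
  have hmem : ∀ y : A, y ∈ I ↔ ∃ c : A, c * a = y := by
    intro y; exact Iff.rfl
  have hIdg : IsDGLeftIdeal 𝒜 D I := by
    refine ⟨?_, ?_, ?_⟩
    · intro y x hx
      rw [hmem] at hx ⊢
      obtain ⟨c, rfl⟩ := hx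
      exact ⟨y * c, mul_assoc y c a⟩
    · intro x hx n
      rw [hmem] at hx
      obtain ⟨c, rfl⟩ := hx
      rw [hmem]
      refine ⟨GradedRing.proj 𝒜 (n - i) c, ?_⟩
      have := proj_mul_right' 𝒜 ha c (n - i)
      rw [sub_add_cancel] at this
      exact this.symm
    · intro x hx
      rw [hmem] at hx ⊢
      obtain ⟨c, rfl⟩ := hx
      exact ⟨D.d c, (d_mul_cycle_s3 𝒜 D ha hda c).symm⟩
  have hItop : I = ⊤ := by
    rcases hs I hIdg with h | h
    · exfalso
      have : a ∈ I := ⟨1, one_mul a⟩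
      rw [h] at this
      exact ha0 this
    · exact h
  obtain ⟨c, hc⟩ : ∃ c : A, c * a = 1 := by
    have h1 : (1 : A) ∈ I := hItop ▸ AddSubgroup.mem_top 1
    exact (hmem 1).mp h1
  set b := GradedRing.proj 𝒜 (-i) c with hbdef
  have hb : b ∈ 𝒜 (-i) := proj_mem 𝒜 (-i) c
  have hba : b * a = 1 := by
    have h1 := proj_mul_right' 𝒜 ha c (-i)
    rw [hc, neg_add_cancel] at h1
    rw [hbdef, ← h1, GradedRing.proj_apply,
      DirectSum.decompose_of_mem_same 𝒜 (SetLike.one_mem_graded 𝒜)]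
  -- a is left regular, hence (by REG) right regular on cycles
  have hlr : ∀ x : A, D.d x = 0 → a * x = 0 → x = 0 := by
    intro x _ hax
    calc x = b * a * x := by rw [hba, one_mul]
    _ = b * (a * x) := mul_assoc _ _ _
    _ = 0 := by rw [hax, mul_zero]
  have hrr : ∀ x : A, D.d x = 0 → x * a = 0 → x = 0 := (hreg i a ha hda).mp hlr
  have hdb : D.d b = 0 := by
    apply hrr
    · exact D.d_sq b
    · have := d_mul_cycle_s3 𝒜 D ha hda b
      rw [hba, d_one' 𝒜 D] at this
      exact this.symm
  have hab : a * b = 1 := by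
    have key : (a * b - 1) * a = 0 := by
      rw [sub_mul, one_mul, mul_assoc, hba, mul_one, sub_self]
    have hcyc : D.d (a * b - 1) = 0 := by
      rw [map_sub, d_one' 𝒜 D, sub_zero, D.leibniz ha b, hda, hdb, zero_mul,
        mul_zero, smul_zero, add_zero]
    exact sub_eq_zero.mp (hrr _ hcyc key)
  exact ⟨b, hdb, hab, hba⟩

/-- (ii) implies (iii). -/
lemma right_simple_to_div (hreg : REG 𝒜 D)
    (hs : ∀ I : AddSubgroup A, IsDGRightIdeal 𝒜 D I → I = ⊥ ∨ I = ⊤) :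
    ∀ (i : ℤ) (a : A), a ∈ 𝒜 i → D.d a = 0 → a ≠ 0 →
      ∃ b : A, D.d b = 0 ∧ a * b = 1 ∧ b * a = 1 := by
  intro i a ha hda ha0
  set I : AddSubgroup A := (AddMonoidHom.mulLeft a).range with hIdef
  have hmem : ∀ y : A, y ∈ I ↔ ∃ c : A, a * c = y := by
    intro y; exact Iff.rfl
  have hIdg : IsDGRightIdeal 𝒜 D I := by
    refine ⟨?_, ?_, ?_⟩
    · intro y x hx
      rw [hmem] at hx ⊢
      obtain ⟨c, rfl⟩ := hx
      exact ⟨c * y, (mul_assoc a c y).symm⟩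
    · intro x hx n
      rw [hmem] at hx
      obtain ⟨c, rfl⟩ := hx
      rw [hmem]
      refine ⟨GradedRing.proj 𝒜 (n - i) c, ?_⟩
      have := proj_mul_left' 𝒜 ha c (n - i)
      rw [add_sub_cancel] at this
      exact this.symm
    · intro x hx
      rw [hmem] at hx
      obtain ⟨c, rfl⟩ := hx
      rw [D.leibniz ha c, hda, zero_mul, zero_add]
      exact AddSubgroup.zsmul_mem I ((hmem _).mpr ⟨D.d c, rfl⟩) _
  have hItop : I = ⊤ := by
    rcases hs I hIdg with h | h
    · exfalso
      have : a ∈ I := ⟨1, mul_one a⟩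
      rw [h] at this
      exact ha0 this
    · exact h
  obtain ⟨c, hc⟩ : ∃ c : A, a * c = 1 := by
    have h1 : (1 : A) ∈ I := hItop ▸ AddSubgroup.mem_top 1
    exact (hmem 1).mp h1
  set b := GradedRing.proj 𝒜 (-i) c with hbdef
  have hb : b ∈ 𝒜 (-i) := proj_mem 𝒜 (-i) c
  have hab : a * b = 1 := by
    have h1 := proj_mul_left' 𝒜 ha c (-i)
    rw [hc, add_neg_cancel] at h1
    rw [hbdef, ← h1, GradedRing.proj_apply,
      DirectSum.decompose_of_mem_same 𝒜 (SetLike.one_mem_graded 𝒜)]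
  have hrr : ∀ x : A, D.d x = 0 → x * a = 0 → x = 0 := by
    intro x _ hxa
    calc x = x * (a * b) := by rw [hab, mul_one]
    _ = x * a * b := (mul_assoc _ _ _).symm
    _ = 0 := by rw [hxa, zero_mul]
  have hlr : ∀ x : A, D.d x = 0 → a * x = 0 → x = 0 := (hreg i a ha hda).mpr hrr
  have hdb : D.d b = 0 := by
    apply hlr _ (D.d_sq b)
    have h0 : (0 : A) = D.d a * b + (((-1 : ℤˣ) ^ i : ℤˣ) : ℤ) • (a * D.d b) := by
      rw [← D.leibniz ha b, hab, d_one' 𝒜 D]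
    rw [hda, zero_mul, zero_add] at h0
    rcases Int.units_eq_one_or ((-1 : ℤˣ) ^ i) with h | h <;>
      rw [h] at h0 <;> simpa using h0.symm
  have hba : b * a = 1 := by
    have key : a * (b * a - 1) = 0 := by
      rw [mul_sub, mul_one, ← mul_assoc, hab, one_mul, sub_self]
    have hcyc : D.d (b * a - 1) = 0 := by
      rw [map_sub, d_one' 𝒜 D, sub_zero, D.leibniz hb a, hda, hdb, zero_mul,
        mul_zero, smul_zero, add_zero]
    exact sub_eq_zero.mp (hlr _ hcyc key)
  exact ⟨b, hdb, hab, hba⟩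

/-- under condition (REG), for a nonzero dg-ring the following are
equivalent: (i) only trivial dg-left ideals; (ii) only trivial dg-right ideals;
(iii) every nonzero homogeneous element of `ker d` is invertible in `ker d`. -/
theorem stmt_3 {A : Type*} [Ring A] [Nontrivial A] (𝒜 : ℤ → AddSubgroup A) [GradedRing 𝒜]
    (D : DGRingData 𝒜) (hreg : REG 𝒜 D) :
    ((∀ I : AddSubgroup A, IsDGLeftIdeal 𝒜 D I → I = ⊥ ∨ I = ⊤) ↔
      (∀ I : AddSubgroup A, IsDGRightIdeal 𝒜 D I → I = ⊥ ∨ I = ⊤)) ∧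
    ((∀ I : AddSubgroup A, IsDGLeftIdeal 𝒜 D I → I = ⊥ ∨ I = ⊤) ↔
      (∀ (i : ℤ) (a : A), a ∈ 𝒜 i → D.d a = 0 → a ≠ 0 →
        ∃ b : A, D.d b = 0 ∧ a * b = 1 ∧ b * a = 1)) := by
  constructor
  · constructor
    · intro h
      exact div_to_right_simple 𝒜 D (left_simple_to_div 𝒜 D hreg h)
    · intro h
      exact div_to_left_simple 𝒜 D (right_simple_to_div 𝒜 D hreg h)
  · exact ⟨left_simple_to_div 𝒜 D hreg, div_to_left_simple 𝒜 D⟩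
end

section
/- Let (D,∂) be a dg-division ring and (M,δ) a left dg-module over (D,∂) with M = ⊕_{i=1}^{m} D·x_i (internal direct sum) for homogeneous elements x_1,…,x_m ∈ ker(δ). Let (N,δ) be a dg-submodule of (M,δ) with N = ⊕_{j=1}^{n} D·y_j for homogeneous elements y_1,…,y_n ∈ ker(δ), and write y_j = Σ_{i=1}^{m} d_{j,i}·x_i with d_{j,i} ∈ D. Then all coefficients d_{j,i} lie in ker(∂). If moreover D is graded commutative, then n ≤ m, and n = m if and only if N = M. -/
variable {A : Type*} [Ring A] (𝒜 : ℤ → AddSubgroup A) [GradedRing 𝒜] (D : DGRingData 𝒜)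

/-- The data of a left dg-module structure on a graded `A`-module `M` over a dg-ring. -/
structure DGModuleData {A : Type*} [Ring A] (𝒜 : ℤ → AddSubgroup A) (D : DGRingData 𝒜)
    {M : Type*} [AddCommGroup M] [Module A M] (ℳ : ℤ → AddSubgroup M) : Type _ where
  δ : M →+ M
  smul_mem : ∀ ⦃i j : ℤ⦄ ⦃a : A⦄ ⦃m : M⦄, a ∈ 𝒜 i → m ∈ ℳ j → a • m ∈ ℳ (i + j)
  δ_mem : ∀ ⦃i : ℤ⦄ ⦃m : M⦄, m ∈ ℳ i → δ m ∈ ℳ (i + 1)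
  δ_sq : ∀ m : M, δ (δ m) = 0
  δ_smul : ∀ ⦃i : ℤ⦄ ⦃a : A⦄, a ∈ 𝒜 i → ∀ m : M,
    δ (a • m) = D.d a • m + (((-1 : ℤˣ) ^ i : ℤˣ) : ℤ) • (a • δ m)

section Mod

variable {A : Type*} [Ring A] (𝒜 : ℤ → AddSubgroup A) (D : DGRingData 𝒜)
variable {M : Type*} [AddCommGroup M] [Module A M] (ℳ : ℤ → AddSubgroup M)
variable [DirectSum.Decomposition ℳ] (DM : DGModuleData 𝒜 D ℳ)

/-- A dg-submodule: a graded, `δ`-stable `A`-submodule, as an additive subgroup. -/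
def IsDGSubmodule (N : AddSubgroup M) : Prop :=
  (∀ a : A, ∀ x ∈ N, a • x ∈ N) ∧
  (∀ x ∈ N, ∀ i : ℤ, ((DirectSum.decompose ℳ x i : ℳ i) : M) ∈ N) ∧
  (∀ x ∈ N, DM.δ x ∈ N)

/-- A dg-module is dg-simple if it is nonzero and has only trivial dg-submodules. -/
def IsDGSimpleModule : Prop :=
  (∃ m : M, m ≠ 0) ∧
  ∀ N : AddSubgroup M, IsDGSubmodule 𝒜 D ℳ DM N → N = ⊥ ∨ N = ⊤

/-- A homogeneous cocycle endomorphism of degree `n` of a dg-module. -/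
def IsCocycleEndo (n : ℤ) (g : M →+ M) : Prop :=
  (∀ ⦃i : ℤ⦄ ⦃m : M⦄, m ∈ ℳ i → g m ∈ ℳ (i + n)) ∧
  (∀ ⦃i : ℤ⦄ ⦃a : A⦄, a ∈ 𝒜 i → ∀ m : M,
    g (a • m) = (((-1 : ℤˣ) ^ (n * i) : ℤˣ) : ℤ) • (a • g m)) ∧
  (∀ m : M, DM.δ (g m) = (((-1 : ℤˣ) ^ n : ℤˣ) : ℤ) • g (DM.δ m))

end Mod

section MyAux

open DirectSum

variable {A₁ : Type*} [Ring A₁] (𝒜₁ : ℤ → AddSubgroup A₁) [GradedRing 𝒜₁] (D₁ : DGRingData 𝒜₁)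

theorem my_d_one : D₁.d 1 = 0 := by
  have h1 : (1 : A₁) ∈ 𝒜₁ 0 := SetLike.one_mem_graded 𝒜₁
  have h := D₁.leibniz h1 1
  simp only [one_mul, mul_one, zpow_zero, Units.val_one, one_smul] at h
  exact (left_eq_add.mp h)

theorem my_d_decompose (a : A₁) (k : ℤ) :
    D₁.d ((DirectSum.decompose 𝒜₁ a k : 𝒜₁ k) : A₁)
      = ((DirectSum.decompose 𝒜₁ (D₁.d a) (k+1) : 𝒜₁ (k+1)) : A₁) := by
  revert k
  induction a using DirectSum.Decomposition.inductionOn 𝒜₁ with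
  | zero => intro k; simp
  | @homogeneous i m =>
    intro k
    by_cases h : i = k
    · subst h
      rw [DirectSum.decompose_of_mem_same 𝒜₁ m.2,
        DirectSum.decompose_of_mem_same 𝒜₁ (D₁.d_mem m.2)]
    · rw [DirectSum.decompose_of_mem_ne 𝒜₁ m.2 h,
        DirectSum.decompose_of_mem_ne 𝒜₁ (D₁.d_mem m.2) (by omega)]
      simp
  | add a b ha hb =>
    intro k
    rw [DirectSum.decompose_add, DirectSum.add_apply, AddSubgroup.coe_add,
      map_add, ha, hb, map_add (D₁.d), DirectSum.decompose_add, DirectSum.add_apply,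
      AddSubgroup.coe_add]

theorem my_d_decompose_cycle {a : A₁} (ha : D₁.d a = 0) (k : ℤ) :
    D₁.d ((DirectSum.decompose 𝒜₁ a k : 𝒜₁ k) : A₁) = 0 := by
  rw [my_d_decompose 𝒜₁ D₁ a k, ha, DirectSum.decompose_zero]
  simp only [DirectSum.zero_apply, ZeroMemClass.coe_zero]

theorem my_leibniz_right {b : A₁} (hb : D₁.d b = 0) (z : A₁) :
    D₁.d (z * b) = D₁.d z * b := by
  induction z using DirectSum.Decomposition.inductionOn 𝒜₁ with
  | zero => simp
  | @homogeneous i m => rw [D₁.leibniz m.2 b, hb]; simp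
  | add z1 z2 h1 h2 => rw [add_mul, map_add, h1, h2, map_add, add_mul]

theorem my_decompose_mul_right {i : ℤ} {a : A₁} (hai : a ∈ 𝒜₁ i) (z : A₁) (k : ℤ) :
    ((DirectSum.decompose 𝒜₁ (z * a) k : 𝒜₁ k) : A₁)
      = ((DirectSum.decompose 𝒜₁ z (k - i) : 𝒜₁ (k - i)) : A₁) * a := by
  revert k
  induction z using DirectSum.Decomposition.inductionOn 𝒜₁ with
  | zero => intro k; simp
  | @homogeneous l m =>
    intro k
    by_cases h : l = k - i
    · have hmem : ((m : A₁) * a) ∈ 𝒜₁ k := by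
        have := SetLike.mul_mem_graded m.2 hai
        rwa [show l + i = k by omega] at this
      rw [DirectSum.decompose_of_mem_same 𝒜₁ hmem]
      rw [show (k - i) = l from h.symm, DirectSum.decompose_of_mem_same 𝒜₁ m.2]
    · have hmem : ((m : A₁) * a) ∈ 𝒜₁ (l + i) := SetLike.mul_mem_graded m.2 hai
      rw [DirectSum.decompose_of_mem_ne 𝒜₁ hmem (by omega),
        DirectSum.decompose_of_mem_ne 𝒜₁ m.2 h, zero_mul]
  | add z1 z2 h1 h2 =>
    intro k
    rw [add_mul, DirectSum.decompose_add, DirectSum.add_apply, AddSubgroup.coe_add, h1, h2,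
      DirectSum.decompose_add, DirectSum.add_apply, AddSubgroup.coe_add, add_mul]

theorem my_decompose_mul_left {i : ℤ} {a : A₁} (hai : a ∈ 𝒜₁ i) (z : A₁) (k : ℤ) :
    ((DirectSum.decompose 𝒜₁ (a * z) k : 𝒜₁ k) : A₁)
      = a * ((DirectSum.decompose 𝒜₁ z (k - i) : 𝒜₁ (k - i)) : A₁) := by
  revert k
  induction z using DirectSum.Decomposition.inductionOn 𝒜₁ with
  | zero => intro k; simp
  | @homogeneous l m =>
    intro k
    by_cases h : l = k - i
    · have hmem : (a * (m : A₁)) ∈ 𝒜₁ k := by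
        have := SetLike.mul_mem_graded hai m.2
        rwa [show i + l = k by omega] at this
      rw [DirectSum.decompose_of_mem_same 𝒜₁ hmem]
      rw [show (k - i) = l from h.symm, DirectSum.decompose_of_mem_same 𝒜₁ m.2]
    · have hmem : (a * (m : A₁)) ∈ 𝒜₁ (i + l) := SetLike.mul_mem_graded hai m.2
      rw [DirectSum.decompose_of_mem_ne 𝒜₁ hmem (by omega),
        DirectSum.decompose_of_mem_ne 𝒜₁ m.2 h, mul_zero]
  | add z1 z2 h1 h2 =>
    intro k
    rw [mul_add, DirectSum.decompose_add, DirectSum.add_apply, AddSubgroup.coe_add, h1, h2,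
      DirectSum.decompose_add, DirectSum.add_apply, AddSubgroup.coe_add, mul_add]

theorem my_inv (hleft : ∀ I : AddSubgroup A₁, IsDGLeftIdeal 𝒜₁ D₁ I → I = ⊥ ∨ I = ⊤)
    (hright : ∀ I : AddSubgroup A₁, IsDGRightIdeal 𝒜₁ D₁ I → I = ⊥ ∨ I = ⊤)
    {i : ℤ} {a : A₁} (hai : a ∈ 𝒜₁ i) (hac : D₁.d a = 0) (ha0 : a ≠ 0) :
    ∃ b : A₁, D₁.d b = 0 ∧ a * b = 1 ∧ b * a = 1 := by
  -- left inverse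
  set I : AddSubgroup A₁ :=
    { carrier := Set.range fun z => z * a
      zero_mem' := ⟨0, zero_mul a⟩
      add_mem' := by rintro x y ⟨z1, rfl⟩ ⟨z2, rfl⟩; exact ⟨z1 + z2, add_mul z1 z2 a⟩
      neg_mem' := by rintro x ⟨z, rfl⟩; exact ⟨-z, neg_mul z a⟩ } with hI
  have hIdg : IsDGLeftIdeal 𝒜₁ D₁ I := by
    refine ⟨?_, ?_, ?_⟩
    · rintro b x ⟨z, rfl⟩; exact ⟨b * z, mul_assoc b z a⟩
    · rintro x ⟨z, rfl⟩ k
      rw [GradedRing.proj_apply, my_decompose_mul_right 𝒜₁ hai z k]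
      exact ⟨_, rfl⟩
    · rintro x ⟨z, rfl⟩
      rw [my_leibniz_right 𝒜₁ D₁ hac z]
      exact ⟨_, rfl⟩
  have haI : a ∈ I := ⟨1, one_mul a⟩
  rcases hleft I hIdg with h | h
  · rw [h] at haI; exact absurd (AddSubgroup.mem_bot.mp haI) ha0
  · have h1 : (1 : A₁) ∈ I := h ▸ AddSubgroup.mem_top 1
    obtain ⟨b, hb0⟩ := h1
    have hb : b * a = 1 := hb0
    -- right inverse
    set J : AddSubgroup A₁ :=
      { carrier := Set.range fun z => a * z
        zero_mem' := ⟨0, mul_zero a⟩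
        add_mem' := by rintro x y ⟨z1, rfl⟩ ⟨z2, rfl⟩; exact ⟨z1 + z2, mul_add a z1 z2⟩
        neg_mem' := by rintro x ⟨z, rfl⟩; exact ⟨-z, mul_neg a z⟩ } with hJ
    have hJdg : IsDGRightIdeal 𝒜₁ D₁ J := by
      refine ⟨?_, ?_, ?_⟩
      · rintro b x ⟨z, rfl⟩; exact ⟨z * b, (mul_assoc a z b).symm⟩
      · rintro x ⟨z, rfl⟩ k
        rw [GradedRing.proj_apply, my_decompose_mul_left 𝒜₁ hai z k]
        exact ⟨_, rfl⟩
      · rintro x ⟨z, rfl⟩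
        rw [D₁.leibniz hai z, hac, zero_mul, zero_add, ← mul_smul_comm]
        exact ⟨_, rfl⟩
    have haJ : a ∈ J := ⟨1, mul_one a⟩
    rcases hright J hJdg with h' | h'
    · rw [h'] at haJ; exact absurd (AddSubgroup.mem_bot.mp haJ) ha0
    · have h1' : (1 : A₁) ∈ J := h' ▸ AddSubgroup.mem_top 1
      obtain ⟨b', hb0'⟩ := h1'
      have hb' : a * b' = 1 := hb0'
      have hbb : b = b' := by
        calc b = b * (a * b') := by rw [hb', mul_one]
        _ = (b * a) * b' := by rw [mul_assoc]
        _ = b' := by rw [hb, one_mul]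
      subst hbb
      have hadb : a * D₁.d b = 0 := by
        have h0 : D₁.d (a * b) = 0 := by rw [hb']; exact my_d_one 𝒜₁ D₁
        rw [D₁.leibniz hai b, hac, zero_mul, zero_add] at h0
        rcases Int.units_eq_one_or ((-1 : ℤˣ) ^ i) with hu | hu <;> rw [hu] at h0 <;>
          simpa using h0
      have hdb : D₁.d b = 0 := by
        calc D₁.d b = (b * a) * D₁.d b := by rw [hb, one_mul]
        _ = b * (a * D₁.d b) := by rw [mul_assoc]
        _ = 0 := by rw [hadb, mul_zero]
      exact ⟨b, hdb, hb', hb⟩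

end MyAux
theorem my_neg_one_zpow_even {k : ℤ} (h : Even k) : ((-1 : ℤˣ) ^ k) = 1 := by
  obtain ⟨t, rfl⟩ := h
  rw [zpow_add, Int.units_mul_self]

theorem my_neg_one_zpow_odd {k : ℤ} (h : Odd k) : ((-1 : ℤˣ) ^ k) = -1 := by
  obtain ⟨t, rfl⟩ := h
  rw [zpow_add, zpow_one, zpow_mul]
  rw [show ((-1 : ℤˣ) ^ (2 : ℤ)) = 1 by rw [show (2:ℤ) = 1 + 1 from rfl, zpow_add, zpow_one,
    Int.units_mul_self], one_zpow, one_mul]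
section MyModAux

variable {A₁ : Type*} [Ring A₁] (𝒜₁ : ℤ → AddSubgroup A₁) [GradedRing 𝒜₁] (D₁ : DGRingData 𝒜₁)
variable {M₁ : Type*} [AddCommGroup M₁] [Module A₁ M₁] (ℳ₁ : ℤ → AddSubgroup M₁)
variable [DirectSum.Decomposition ℳ₁] (DM₁ : DGModuleData 𝒜₁ D₁ ℳ₁)

theorem my_δ_smul_cycle {z : M₁} (hz : DM₁.δ z = 0) (a : A₁) :
    DM₁.δ (a • z) = D₁.d a • z := by
  induction a using DirectSum.Decomposition.inductionOn 𝒜₁ with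
  | zero => simp
  | @homogeneous i m => rw [DM₁.δ_smul m.2 z, hz]; simp
  | add a b ha hb => rw [add_smul, map_add, ha, hb, map_add (D₁.d), add_smul]

include DM₁ in
theorem my_decompose_smul {j : ℤ} {z : M₁} (hz : z ∈ ℳ₁ j) (a : A₁) (k : ℤ) :
    ((DirectSum.decompose ℳ₁ (a • z) k : ℳ₁ k) : M₁)
      = ((DirectSum.decompose 𝒜₁ a (k - j) : 𝒜₁ (k - j)) : A₁) • z := by
  revert k
  induction a using DirectSum.Decomposition.inductionOn 𝒜₁ with
  | zero => intro k; simp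
  | @homogeneous l m =>
    intro k
    by_cases h : l = k - j
    · have hmem : ((m : A₁) • z) ∈ ℳ₁ k := by
        have := DM₁.smul_mem m.2 hz
        rwa [show l + j = k by omega] at this
      rw [DirectSum.decompose_of_mem_same ℳ₁ hmem]
      rw [show (k - j) = l from h.symm, DirectSum.decompose_of_mem_same 𝒜₁ m.2]
    · have hmem : ((m : A₁) • z) ∈ ℳ₁ (l + j) := DM₁.smul_mem m.2 hz
      rw [DirectSum.decompose_of_mem_ne ℳ₁ hmem (by omega),
        DirectSum.decompose_of_mem_ne 𝒜₁ m.2 h, zero_smul]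
  | add a b ha hb =>
    intro k
    rw [add_smul, DirectSum.decompose_add, DirectSum.add_apply, AddSubgroup.coe_add, ha, hb,
      DirectSum.decompose_add, DirectSum.add_apply, AddSubgroup.coe_add, add_smul]

theorem my_decompose_finsum {ι : Type*} (s : Finset ι) (f : ι → M₁) (k : ℤ) :
    ((DirectSum.decompose ℳ₁ (∑ i ∈ s, f i) k : ℳ₁ k) : M₁)
      = ∑ i ∈ s, ((DirectSum.decompose ℳ₁ (f i) k : ℳ₁ k) : M₁) := by
  rw [DirectSum.decompose_sum, DFinsupp.finset_sum_apply, AddSubmonoidClass.coe_finset_sum]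

theorem my_ann (hleft : ∀ I : AddSubgroup A₁, IsDGLeftIdeal 𝒜₁ D₁ I → I = ⊥ ∨ I = ⊤)
    {j : ℤ} {z : M₁} (hz : z ∈ ℳ₁ j) (hzc : DM₁.δ z = 0) (hz0 : z ≠ 0)
    {a : A₁} (haz : a • z = 0) : a = 0 := by
  set I : AddSubgroup A₁ :=
    { carrier := {b : A₁ | b • z = 0}
      zero_mem' := zero_smul A₁ z
      add_mem' := by
        intro b c hb hc
        simp only [Set.mem_setOf_eq] at *
        rw [add_smul, hb, hc, add_zero]
      neg_mem' := by
        intro b hb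
        simp only [Set.mem_setOf_eq] at *
        rw [neg_smul, hb, neg_zero] } with hIdef
  have hIdg : IsDGLeftIdeal 𝒜₁ D₁ I := by
    refine ⟨?_, ?_, ?_⟩
    · intro c b hb
      have hb' : b • z = 0 := hb
      show (c * b) • z = 0
      rw [mul_smul, hb', smul_zero]
    · intro b hb k
      have hb' : b • z = 0 := hb
      show ((GradedRing.proj 𝒜₁ k b) : A₁) • z = 0
      rw [GradedRing.proj_apply]
      have := my_decompose_smul 𝒜₁ D₁ ℳ₁ DM₁ hz b (k + j)
      rw [hb', add_sub_cancel_right] at this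
      rw [← this]
      simp
    · intro b hb
      have hb' : b • z = 0 := hb
      show (D₁.d b) • z = 0
      rw [← my_δ_smul_cycle 𝒜₁ D₁ ℳ₁ DM₁ hzc b, hb', map_zero]
  have h1 : (1 : A₁) ∉ I := by
    intro h1
    have : (1 : A₁) • z = 0 := h1
    rw [one_smul] at this
    exact hz0 this
  rcases hleft I hIdg with h | h
  · have : a ∈ I := haz
    rw [h] at this
    exact AddSubgroup.mem_bot.mp this
  · exact absurd (h ▸ AddSubgroup.mem_top 1) h1

theorem my_indep (hleft : ∀ I : AddSubgroup A₁, IsDGLeftIdeal 𝒜₁ D₁ I → I = ⊥ ∨ I = ⊤)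
    {p : ℕ} (v : Fin p → M₁) (hv0 : ∀ j, v j ≠ 0) (hvhom : ∀ j, ∃ k, v j ∈ ℳ₁ k)
    (hvc : ∀ j, DM₁.δ (v j) = 0)
    (hvind : iSupIndep (fun j : Fin p => Submodule.span A₁ ({v j} : Set M₁)))
    (a : Fin p → A₁) (ha : ∑ j, a j • v j = 0) : ∀ j, a j = 0 := by
  intro j
  have h1 : a j • v j ∈ Submodule.span A₁ ({v j} : Set M₁) :=
    Submodule.smul_mem _ _ (Submodule.mem_span_singleton_self _)
  have h2 : a j • v j = - ∑ j' ∈ Finset.univ.erase j, a j' • v j' := by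
    rw [eq_neg_iff_add_eq_zero,
      Finset.add_sum_erase Finset.univ (fun x => a x • v x) (Finset.mem_univ j)]
    exact ha
  have h3 : a j • v j ∈ ⨆ (j' : Fin p) (_ : j' ≠ j), Submodule.span A₁ ({v j'} : Set M₁) := by
    rw [h2]
    refine neg_mem (Submodule.sum_mem _ ?_)
    intro j' hj'
    have hne : j' ≠ j := Finset.ne_of_mem_erase hj'
    have : Submodule.span A₁ ({v j'} : Set M₁)
        ≤ ⨆ (j'' : Fin p) (_ : j'' ≠ j), Submodule.span A₁ ({v j''} : Set M₁) :=
      le_iSup_of_le j' (le_iSup_of_le hne le_rfl)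
    exact this (Submodule.smul_mem _ _ (Submodule.mem_span_singleton_self _))
  have h4 : a j • v j = 0 := by
    have hd := (iSupIndep_def.mp hvind) j
    exact (Submodule.mem_bot A₁).mp (hd.le_bot (Submodule.mem_inf.mpr ⟨h1, h3⟩))
  obtain ⟨k, hk⟩ := hvhom j
  exact my_ann 𝒜₁ D₁ ℳ₁ DM₁ hleft hk (hvc j) (hv0 j) h4

end MyModAux
/-- let `(D,∂)` be a dg-division ring and `M = ⊕_{i=1}^{m} D·x_i` a left
dg-module with free dg-basis of homogeneous cycles `x_i`, and let `N = ⊕_{j=1}^{n} D·y_j`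
be a dg-submodule with free dg-basis of homogeneous cycles `y_j`.  If
`y_j = Σ_i c_{j,i}·x_i`, then all coefficients `c_{j,i}` are cycles; if moreover `D` is
graded commutative then `n ≤ m`, and `n = m` iff `N = M`. -/
theorem stmt_10 {A : Type*} [Ring A] [Nontrivial A] (𝒜 : ℤ → AddSubgroup A) [GradedRing 𝒜]
    (D : DGRingData 𝒜)
    (hleft : ∀ I : AddSubgroup A, IsDGLeftIdeal 𝒜 D I → I = ⊥ ∨ I = ⊤)
    (hright : ∀ I : AddSubgroup A, IsDGRightIdeal 𝒜 D I → I = ⊥ ∨ I = ⊤)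
    {M : Type*} [AddCommGroup M] [Module A M] (ℳ : ℤ → AddSubgroup M)
    [DirectSum.Decomposition ℳ] (DM : DGModuleData 𝒜 D ℳ)
    (m n : ℕ) (x : Fin m → M) (y : Fin n → M)
    (hx0 : ∀ i, x i ≠ 0) (hxhom : ∀ i, ∃ k : ℤ, x i ∈ ℳ k) (hxc : ∀ i, DM.δ (x i) = 0)
    -- `M = ⊕_{i=1}^{m} D·x_i`
    (hxind : iSupIndep (fun i : Fin m => Submodule.span A ({x i} : Set M)))
    (hxspan : (⨆ i : Fin m, Submodule.span A ({x i} : Set M)) = ⊤)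
    (N : AddSubgroup M) (hN : IsDGSubmodule 𝒜 D ℳ DM N)
    (hy0 : ∀ j, y j ≠ 0) (hyhom : ∀ j, ∃ k : ℤ, y j ∈ ℳ k) (hyc : ∀ j, DM.δ (y j) = 0)
    -- `N = ⊕_{j=1}^{n} D·y_j`
    (hyind : iSupIndep (fun j : Fin n => Submodule.span A ({y j} : Set M)))
    (hyspan : (N : Set M) = ((⨆ j : Fin n, Submodule.span A ({y j} : Set M) : Submodule A M) : Set M))
    -- the coefficients of the `y_j` in the basis `x_i`
    (c : Fin n → Fin m → A) (hc : ∀ j, y j = ∑ i : Fin m, c j i • x i) :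
    (∀ j i, D.d (c j i) = 0) ∧
    ((∀ (k l : ℤ) (a b : A), a ∈ 𝒜 k → b ∈ 𝒜 l →
        a * b = (((-1 : ℤˣ) ^ (k * l) : ℤˣ) : ℤ) • (b * a)) →
      n ≤ m ∧ (n = m ↔ N = ⊤)) := by
  classical
  choose kx hkx using hxhom
  choose ky hky using hyhom
  have hxhom' : ∀ i, ∃ k, x i ∈ ℳ k := fun i => ⟨kx i, hkx i⟩
  have hyhom' : ∀ j, ∃ k, y j ∈ ℳ k := fun j => ⟨ky j, hky j⟩
  have hyN : ∀ j, y j ∈ N := by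
    intro j
    have h1 : y j ∈ (⨆ j' : Fin n, Submodule.span A ({y j'} : Set M)) :=
      (le_iSup (fun j' : Fin n => Submodule.span A ({y j'} : Set M)) j)
        (Submodule.mem_span_singleton_self _)
    show y j ∈ (N : Set M)
    rw [hyspan]
    exact h1
  have hxindA : ∀ a : Fin m → A, ∑ i, a i • x i = 0 → ∀ i, a i = 0 :=
    my_indep 𝒜 D ℳ DM hleft x hx0 hxhom' hxc hxind
  have hyindA : ∀ a : Fin n → A, ∑ j, a j • y j = 0 → ∀ j, a j = 0 :=
    my_indep 𝒜 D ℳ DM hleft y hy0 hyhom' hyc hyind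
  -- Part 1 : the coefficients are cycles
  have hccyc : ∀ j i, D.d (c j i) = 0 := by
    intro j
    refine hxindA (fun i => D.d (c j i)) ?_
    have h1 : DM.δ (∑ i, c j i • x i) = 0 := by rw [← hc j]; exact hyc j
    rw [map_sum] at h1
    calc ∑ i, D.d (c j i) • x i = ∑ i, DM.δ (c j i • x i) := by
          refine Finset.sum_congr rfl fun i _ => ?_
          rw [my_δ_smul_cycle 𝒜 D ℳ DM (hxc i) (c j i)]
      _ = 0 := h1
  -- homogeneity of the coefficients
  have hchom : ∀ j i, c j i ∈ 𝒜 (ky j - kx i) := by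
    intro j i
    have h1 : ((DirectSum.decompose ℳ (y j) (ky j) : ℳ (ky j)) : M)
        = ∑ i', ((DirectSum.decompose 𝒜 (c j i') (ky j - kx i') : 𝒜 (ky j - kx i')) : A) • x i' := by
      rw [hc j, my_decompose_finsum]
      exact Finset.sum_congr rfl fun i' _ =>
        my_decompose_smul 𝒜 D ℳ DM (hkx i') (c j i') (ky j)
    rw [DirectSum.decompose_of_mem_same ℳ (hky j)] at h1
    have h2 : ∑ i', c j i' • x i'
        = ∑ i', ((DirectSum.decompose 𝒜 (c j i') (ky j - kx i') : 𝒜 (ky j - kx i')) : A) • x i' := by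
      rw [← hc j]; exact h1
    have h3 : ∀ i', c j i'
        = ((DirectSum.decompose 𝒜 (c j i') (ky j - kx i') : 𝒜 (ky j - kx i')) : A) := by
      intro i'
      have h0 : ∑ i', (c j i'
          - ((DirectSum.decompose 𝒜 (c j i') (ky j - kx i') : 𝒜 (ky j - kx i')) : A)) • x i' = 0 := by
        simp only [sub_smul]
        rw [Finset.sum_sub_distrib, h2, sub_self]
      exact sub_eq_zero.mp (hxindA _ h0 i')
    rw [h3 i]
    exact SetLike.coe_mem _
  refine ⟨hccyc, fun hgc => ?_⟩
  -- cycles commute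
  have hcommhom : ∀ (i j : ℤ) (a b : A), a ∈ 𝒜 i → b ∈ 𝒜 j → D.d a = 0 → D.d b = 0 →
      a * b = b * a := by
    intro i j a b hai hbj hac hbc
    rcases eq_or_ne a 0 with rfl | ha0; · rw [zero_mul, mul_zero]
    rcases eq_or_ne b 0 with rfl | hb0; · rw [zero_mul, mul_zero]
    have h1 := hgc i j a b hai hbj
    rcases Int.even_or_odd (i * j) with he | ho
    · rw [h1, my_neg_one_zpow_even he]
      simp
    · have hoi : Odd i := (Int.odd_mul.mp ho).1
      have h2 := hgc i i a a hai hai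
      rw [my_neg_one_zpow_odd (Int.odd_mul.mpr ⟨hoi, hoi⟩)] at h2
      simp only [Units.val_neg, Units.val_one, neg_smul, one_smul] at h2
      have e3 : a * a + a * a = 0 := by nth_rewrite 1 [h2]; exact neg_add_cancel _
      obtain ⟨u, hu, hau, hua⟩ := my_inv 𝒜 D hleft hright hai hac ha0
      have e1 : u * (a * a) * u = 1 := by
        rw [mul_assoc u (a*a) u, mul_assoc a a u, hau, mul_one, hua]
      have h11 : (1 : A) + 1 = 0 := by
        rw [← e1, ← add_mul, ← mul_add, e3, mul_zero, zero_mul]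
      have hba : b * a + b * a = 0 := by
        rw [← one_mul (b * a), ← add_mul, h11, zero_mul]
      rw [h1, my_neg_one_zpow_odd ho]
      simp only [Units.val_neg, Units.val_one, neg_smul, one_smul]
      exact neg_eq_of_add_eq_zero_left hba
  have hcomm : ∀ a b : A, D.d a = 0 → D.d b = 0 → a * b = b * a := by
    intro a b hac hbc
    conv_lhs => rw [← DirectSum.sum_support_decompose 𝒜 a, ← DirectSum.sum_support_decompose 𝒜 b]
    conv_rhs => rw [← DirectSum.sum_support_decompose 𝒜 a, ← DirectSum.sum_support_decompose 𝒜 b]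
    rw [Finset.sum_mul_sum, Finset.sum_mul_sum, Finset.sum_comm]
    refine Finset.sum_congr rfl fun l _ => Finset.sum_congr rfl fun k _ => ?_
    exact hcommhom _ _ _ _ (SetLike.coe_mem _) (SetLike.coe_mem _)
      (my_d_decompose_cycle 𝒜 D hac k) (my_d_decompose_cycle 𝒜 D hbc l)
  -- no zero divisors among cycles
  have hdom : ∀ a b : A, D.d a = 0 → D.d b = 0 → a ≠ 0 → b ≠ 0 → a * b ≠ 0 := by
    intro a b hac hbc ha0 hb0 hab
    have hsa : (DirectSum.decompose 𝒜 a).support.Nonempty := by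
      rw [Finset.nonempty_iff_ne_empty]
      intro hemp
      exact ha0 (by rw [← DirectSum.sum_support_decompose 𝒜 a, hemp, Finset.sum_empty])
    have hsb : (DirectSum.decompose 𝒜 b).support.Nonempty := by
      rw [Finset.nonempty_iff_ne_empty]
      intro hemp
      exact hb0 (by rw [← DirectSum.sum_support_decompose 𝒜 b, hemp, Finset.sum_empty])
    set i := (DirectSum.decompose 𝒜 a).support.max' hsa with hidef
    set j := (DirectSum.decompose 𝒜 b).support.max' hsb with hjdef
    have hims : i ∈ (DirectSum.decompose 𝒜 a).support := Finset.max'_mem _ _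
    have hjms : j ∈ (DirectSum.decompose 𝒜 b).support := Finset.max'_mem _ _
    have hai0 : ((DirectSum.decompose 𝒜 a i : 𝒜 i) : A) ≠ 0 := by
      intro h
      exact (DFinsupp.mem_support_iff.mp hims) (Subtype.ext h)
    have hbj0 : ((DirectSum.decompose 𝒜 b j : 𝒜 j) : A) ≠ 0 := by
      intro h
      exact (DFinsupp.mem_support_iff.mp hjms) (Subtype.ext h)
    have key : ((DirectSum.decompose 𝒜 (a * b) (i + j) : 𝒜 (i + j)) : A)
        = ((DirectSum.decompose 𝒜 a i : 𝒜 i) : A) * ((DirectSum.decompose 𝒜 b j : 𝒜 j) : A) := by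
      have hab' : a * b = ∑ k ∈ (DirectSum.decompose 𝒜 a).support,
          ∑ l ∈ (DirectSum.decompose 𝒜 b).support,
            ((DirectSum.decompose 𝒜 a k : 𝒜 k) : A) * ((DirectSum.decompose 𝒜 b l : 𝒜 l) : A) := by
        conv_lhs => rw [← DirectSum.sum_support_decompose 𝒜 a,
          ← DirectSum.sum_support_decompose 𝒜 b]
        rw [Finset.sum_mul_sum]
      rw [hab', my_decompose_finsum]
      rw [Finset.sum_eq_single i]
      · rw [my_decompose_finsum, Finset.sum_eq_single j]
        · exact DirectSum.decompose_of_mem_same 𝒜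
            (SetLike.mul_mem_graded (SetLike.coe_mem _) (SetLike.coe_mem _))
        · intro l hl hlj
          refine DirectSum.decompose_of_mem_ne 𝒜
            (SetLike.mul_mem_graded (SetLike.coe_mem _) (SetLike.coe_mem _)) ?_
          have : l ≤ j := Finset.le_max' _ _ hl
          omega
        · intro h; exact absurd hjms h
      · intro k hk hki
        rw [my_decompose_finsum]
        refine Finset.sum_eq_zero fun l hl => ?_
        refine DirectSum.decompose_of_mem_ne 𝒜
          (SetLike.mul_mem_graded (SetLike.coe_mem _) (SetLike.coe_mem _)) ?_
        have h1 : k ≤ i := Finset.le_max' _ _ hk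
        have h2 : l ≤ j := Finset.le_max' _ _ hl
        omega
      · intro h; exact absurd hims h
    rw [hab, DirectSum.decompose_zero] at key
    simp only [DirectSum.zero_apply, ZeroMemClass.coe_zero] at key
    obtain ⟨ua, hua, haua, huaa⟩ := my_inv 𝒜 D hleft hright (SetLike.coe_mem _)
      (my_d_decompose_cycle 𝒜 D hac i) hai0
    obtain ⟨ub, hub, hbub, hubb⟩ := my_inv 𝒜 D hleft hright (SetLike.coe_mem _)
      (my_d_decompose_cycle 𝒜 D hbc j) hbj0
    have h1 : ua * (((DirectSum.decompose 𝒜 a i : 𝒜 i) : A)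
        * ((DirectSum.decompose 𝒜 b j : 𝒜 j) : A)) * ub = 1 := by
      rw [← mul_assoc ua _ _, huaa, one_mul, hbub]
    rw [← key, mul_zero, zero_mul] at h1
    exact one_ne_zero h1.symm
  -- the subring of cycles
  set K : Subring A :=
    { carrier := {a : A | D.d a = 0}
      zero_mem' := map_zero D.d
      one_mem' := my_d_one 𝒜 D
      add_mem' := by
        intro a b ha hb
        simp only [Set.mem_setOf_eq] at *
        rw [map_add, ha, hb, add_zero]
      neg_mem' := by
        intro a ha
        simp only [Set.mem_setOf_eq] at *
        rw [map_neg, ha, neg_zero]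
      mul_mem' := by
        intro a b ha hb
        simp only [Set.mem_setOf_eq] at *
        rw [my_leibniz_right 𝒜 D hb a, ha, zero_mul] } with hK
  have hmemK : ∀ z : A, z ∈ K ↔ D.d z = 0 := fun z => Iff.rfl
  letI : CommRing K :=
    { (inferInstance : Ring K) with
      mul_comm := fun a b => Subtype.ext (hcomm (a : A) (b : A) a.2 b.2) }
  haveI : Nontrivial K := ⟨⟨1, 0, fun h => (one_ne_zero : (1 : A) ≠ 0) (congrArg Subtype.val h)⟩⟩
  haveI : NoZeroDivisors K := by
    refine ⟨fun {a b} hab => ?_⟩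
    by_contra hcon
    push_neg at hcon
    obtain ⟨ha, hb⟩ := hcon
    refine hdom (a : A) (b : A) a.2 b.2 (fun h => ha (Subtype.ext h))
      (fun h => hb (Subtype.ext h)) ?_
    exact congrArg Subtype.val hab
  letI : IsDomain K := NoZeroDivisors.to_isDomain K
  -- rearranging double sums
  have hcombine : ∀ (p q : ℕ) (w : Fin q → M) (e : Fin p → Fin q → A) (uu : Fin p → A)
      (vv : Fin p → M), (∀ j, vv j = ∑ i, e j i • w i) →
      ∑ j, uu j • vv j = ∑ i, (∑ j, uu j * e j i) • w i := by
    intro p q w e uu vv hve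
    calc ∑ j, uu j • vv j = ∑ j, ∑ i, (uu j * e j i) • w i := by
          refine Finset.sum_congr rfl fun j _ => ?_
          rw [hve j, Finset.smul_sum]
          exact Finset.sum_congr rfl fun i _ => smul_smul _ _ _
      _ = ∑ i, ∑ j, (uu j * e j i) • w i := Finset.sum_comm
      _ = ∑ i, (∑ j, uu j * e j i) • w i := by
          refine Finset.sum_congr rfl fun i _ => ?_
          rw [Finset.sum_smul]
  -- the key cardinality comparison
  have key_le : ∀ (p q : ℕ) (v : Fin p → M) (w : Fin q → M),
      (∀ a : Fin p → A, ∑ j, a j • v j = 0 → ∀ j, a j = 0) →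
      ∀ (e : Fin p → Fin q → A), (∀ j i, D.d (e j i) = 0) →
      (∀ j, v j = ∑ i, e j i • w i) → p ≤ q := by
    intro p q v w hvindA e hec hve
    let ebar : Fin p → Fin q → K := fun j i => ⟨e j i, hec j i⟩
    let f : (Fin p → K) →ₗ[K] (Fin q → K) :=
      { toFun := fun u i => ∑ j, u j * ebar j i
        map_add' := by
          intro u1 u2
          funext i
          simp [add_mul, Finset.sum_add_distrib]
        map_smul' := by
          intro r u
          funext i
          simp [Finset.mul_sum, mul_assoc, smul_eq_mul] }
    have hz : ∀ uu : Fin p → K, f uu = 0 → uu = 0 := by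
      intro uu huu
      have hcoord : ∀ i, (∑ j, ((uu j : A) * e j i)) = 0 := by
        intro i
        have h1 : (∑ j, uu j * ebar j i) = (0 : K) := congrFun huu i
        have h2 := congrArg (Subtype.val) h1
        rw [AddSubmonoidClass.coe_finset_sum] at h2
        simpa using h2
      have hsum : ∑ j, (uu j : A) • v j = 0 := by
        rw [hcombine p q w e (fun j => (uu j : A)) v hve]
        refine Finset.sum_eq_zero fun i _ => ?_
        rw [hcoord i, zero_smul]
      funext j
      exact Subtype.ext (hvindA _ hsum j)
    have hinj : Function.Injective f := by
      intro u1 u2 h12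
      have h0 : f (u1 - u2) = 0 := by rw [map_sub, h12, sub_self]
      have := hz _ h0
      exact sub_eq_zero.mp this
    simpa using card_le_of_injective K f hinj
  have hnm : n ≤ m := key_le n m y x hyindA c hccyc hc
  refine ⟨hnm, ?_, ?_⟩
  · -- n = m → N = ⊤
    intro hnmeq
    subst hnmeq
    let CM : Matrix (Fin n) (Fin n) K := Matrix.of fun j i => (⟨c j i, hccyc j i⟩ : K)
    have hCMcoe : ∀ j i, ((CM j i : K) : A) = c j i := fun j i => rfl
    have hdet0 : CM.det ≠ 0 := by
      intro h0
      obtain ⟨v, hv0, hveq⟩ := Matrix.exists_vecMul_eq_zero_iff.mpr h0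
      have hco : ∀ i, ∑ j, (v j : A) * c j i = 0 := by
        intro i
        have h1 : (∑ j, v j * CM j i) = (0 : K) := by
          have := congrFun hveq i
          simpa [Matrix.vecMul, dotProduct] using this
        have h2 := congrArg (Subtype.val) h1
        rw [AddSubmonoidClass.coe_finset_sum] at h2
        simpa [hCMcoe] using h2
      have hsum : ∑ j, (v j : A) • y j = 0 := by
        rw [hcombine n n x c (fun j => (v j : A)) y hc]
        refine Finset.sum_eq_zero fun i _ => ?_
        rw [hco i, zero_smul]
      refine hv0 (funext fun j => Subtype.ext (hyindA _ hsum j))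
    have hprod : ∀ (r : ℕ) (g : Fin r → K) (dg : Fin r → ℤ), (∀ t, (g t : A) ∈ 𝒜 (dg t)) →
        ((∏ t, g t : K) : A) ∈ 𝒜 (∑ t, dg t) := by
      intro r
      induction r with
      | zero =>
        intro g dg _
        simp only [Finset.univ_eq_empty, Finset.prod_empty, Finset.sum_empty]
        exact SetLike.one_mem_graded 𝒜
      | succ r ih =>
        intro g dg hg
        rw [Fin.prod_univ_succ, Fin.sum_univ_succ]
        exact SetLike.mul_mem_graded (hg 0) (ih _ _ (fun t => hg t.succ))
    have hdethom : ((CM.det : K) : A) ∈ 𝒜 ((∑ j, ky j) - (∑ i, kx i)) := by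
      rw [Matrix.det_apply, AddSubmonoidClass.coe_finset_sum]
      refine AddSubgroup.sum_mem _ fun σ _ => ?_
      rw [Units.smul_def]
      have hcz : ((((Equiv.Perm.sign σ : ℤˣ) : ℤ) • (∏ i, CM (σ i) i) : K) : A)
          = ((Equiv.Perm.sign σ : ℤˣ) : ℤ) • ((∏ i, CM (σ i) i : K) : A) := rfl
      rw [hcz]
      refine AddSubgroup.zsmul_mem _ ?_ _
      have hE : ∑ i, (ky (σ i) - kx i) = (∑ j, ky j) - (∑ i, kx i) := by
        rw [Finset.sum_sub_distrib, Equiv.sum_comp σ ky]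
      rw [← hE]
      exact hprod n (fun i => CM (σ i) i) (fun i => ky (σ i) - kx i)
        (fun i => hchom (σ i) i)
    obtain ⟨u, hu, hdu, hud⟩ := my_inv 𝒜 D hleft hright hdethom ((CM.det).2)
      (fun h => hdet0 (Subtype.ext h))
    have hdetu : CM.det * (⟨u, hu⟩ : K) = 1 := Subtype.ext hdu
    let B : Matrix (Fin n) (Fin n) K := (⟨u, hu⟩ : K) • CM.adjugate
    have hBC : B * CM = 1 := by
      show ((⟨u, hu⟩ : K) • CM.adjugate) * CM = 1
      rw [Matrix.smul_mul, Matrix.adjugate_mul, smul_smul, mul_comm, hdetu, one_smul]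
    have hxmem : ∀ i, x i ∈ N := by
      intro i
      have hxeq : x i = ∑ j, (B i j : A) • y j := by
        have hone : ∑ i', (((1 : Matrix (Fin n) (Fin n) K) i i' : K) : A) • x i' = x i := by
          rw [Finset.sum_eq_single i]
          · rw [Matrix.one_apply_eq]; simp
          · intro i' _ hii
            rw [Matrix.one_apply_ne (Ne.symm hii)]
            simp
          · intro h; exact absurd (Finset.mem_univ i) h
        rw [hcombine n n x c (fun j => (B i j : A)) y hc, ← hone]
        refine Finset.sum_congr rfl fun i' _ => ?_
        congr 1
        have h1 : ((B * CM) i i' : K) = (1 : Matrix (Fin n) (Fin n) K) i i' := by rw [hBC]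
        rw [Matrix.mul_apply] at h1
        have h2 := congrArg (Subtype.val) h1
        rw [AddSubmonoidClass.coe_finset_sum] at h2
        rw [← h2]
        exact Finset.sum_congr rfl fun j _ => rfl
      rw [hxeq]
      exact AddSubgroup.sum_mem N fun j _ => hN.1 _ _ (hyN j)
    rw [AddSubgroup.eq_top_iff']
    intro z
    have hz : z ∈ Submodule.span A (Set.range x) := by
      rw [Submodule.span_range_eq_iSup, hxspan]
      trivial
    obtain ⟨a, ha⟩ := (Submodule.mem_span_range_iff_exists_fun _).mp hz
    rw [← ha]
    exact AddSubgroup.sum_mem N fun i _ => hN.1 _ _ (hxmem i)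
  · -- N = ⊤ → n = m
    intro hNtop
    refine le_antisymm hnm ?_
    have hxN : ∀ i, x i ∈ (⨆ j : Fin n, Submodule.span A ({y j} : Set M)) := by
      intro i
      have h1 : x i ∈ (N : Set M) := by rw [hNtop]; trivial
      rw [hyspan] at h1
      exact h1
    have hb : ∀ i, ∃ b : Fin n → A, ∑ j, b j • y j = x i := by
      intro i
      have h1 := hxN i
      rw [← Submodule.span_range_eq_iSup] at h1
      exact (Submodule.mem_span_range_iff_exists_fun _).mp h1
    choose b hbx using hb
    have hbcyc : ∀ i j, D.d (b i j) = 0 := by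
      intro i
      refine hyindA (fun j => D.d (b i j)) ?_
      have h1 : DM.δ (∑ j, b i j • y j) = 0 := by rw [hbx i]; exact hxc i
      rw [map_sum] at h1
      calc ∑ j, D.d (b i j) • y j = ∑ j, DM.δ (b i j • y j) := by
            refine Finset.sum_congr rfl fun j _ => ?_
            rw [my_δ_smul_cycle 𝒜 D ℳ DM (hyc j) (b i j)]
        _ = 0 := h1
    exact key_le m n x y hxindA b hbcyc (fun i => (hbx i).symm)
end

section
/- Let (A,d) be a nonzero dg-simple dg-ring (its only two-sided dg-ideals are 0 and A). Then (Z_gr(A), d) is a dg-division ring: the only dg-left ideals and the only dg-right ideals of the dg-ring (Z_gr(A), d) are 0 and Z_gr(A). -/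
variable {A : Type*} [Ring A] (𝒜 : ℤ → AddSubgroup A) [GradedRing 𝒜] (D : DGRingData 𝒜)

/-- A homogeneous element `a` of degree `i` which graded-commutes with every
homogeneous element: `a·b = (−1)^{i·j}·b·a` for all `b ∈ 𝒜 j`. -/
def IsGrCentralHomog {A : Type*} [Ring A] (𝒜 : ℤ → AddSubgroup A) (a : A) : Prop :=
  ∃ i : ℤ, a ∈ 𝒜 i ∧ ∀ (j : ℤ), ∀ b ∈ 𝒜 j,
    a * b = (((-1 : ℤˣ) ^ (i * j) : ℤˣ) : ℤ) • (b * a)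

/-- The graded centre: the subring generated by the graded-central homogeneous elements. -/
def grCentre {A : Type*} [Ring A] (𝒜 : ℤ → AddSubgroup A) : Subring A :=
  Subring.closure {a : A | IsGrCentralHomog 𝒜 a}

/-- A two-sided dg-ideal: a graded, `d`-stable two-sided ideal, as an additive subgroup. -/
def IsDGTwoSidedIdeal {A : Type*} [Ring A] (𝒜 : ℤ → AddSubgroup A) [GradedRing 𝒜]
    (D : DGRingData 𝒜) (I : AddSubgroup A) : Prop :=
  (∀ a : A, ∀ x ∈ I, a * x ∈ I) ∧
  (∀ a : A, ∀ x ∈ I, x * a ∈ I) ∧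
  (∀ x ∈ I, ∀ i : ℤ, GradedRing.proj 𝒜 i x ∈ I) ∧
  (∀ x ∈ I, D.d x ∈ I)


namespace Stmt12Aux

open DirectSum
set_option linter.unusedSectionVars false

def sgn (n : ℤ) : ℤ := (((-1 : ℤˣ) ^ n : ℤˣ) : ℤ)

lemma sgn_add (m n : ℤ) : sgn (m + n) = sgn m * sgn n := by
  unfold sgn; rw [zpow_add]; push_cast; ring

lemma sgn_sq (n : ℤ) : sgn n * sgn n = 1 := by
  unfold sgn
  rw [← Units.val_mul, Int.units_mul_self]
  rfl

lemma sgn_add_two_mul (m k : ℤ) : sgn (m + 2 * k) = sgn m := by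
  rw [show m + 2*k = m + (k + k) by ring, sgn_add, sgn_add, ← mul_assoc,
    mul_assoc (sgn m), sgn_sq, mul_one]

lemma sgn_neg (n : ℤ) : sgn (-n) = sgn n := by
  have h := sgn_add_two_mul (-n) n
  rw [show -n + 2*n = n by ring] at h
  exact h.symm

lemma sgn_zero : sgn 0 = 1 := by unfold sgn; simp

variable {R : Type*} [Ring R]

lemma sgn_smul_smul (m : ℤ) (x : R) : sgn m • sgn m • x = x := by
  rw [smul_smul, sgn_sq, one_smul]

/-- Graded-central of a fixed degree. -/
def GC (ℬ : ℤ → AddSubgroup R) (i : ℤ) (a : R) : Prop :=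
  a ∈ ℬ i ∧ ∀ j : ℤ, ∀ b ∈ ℬ j, a * b = sgn (i * j) • (b * a)

variable {ℬ : ℤ → AddSubgroup R} [GradedRing ℬ]

lemma gc_zero (i : ℤ) : GC ℬ i (0 : R) :=
  ⟨zero_mem _, fun j b _ => by simp⟩

lemma gc_add {i : ℤ} {a b : R} (ha : GC ℬ i a) (hb : GC ℬ i b) : GC ℬ i (a + b) :=
  ⟨add_mem ha.1 hb.1, fun j c hc => by
    rw [add_mul, mul_add, ha.2 j c hc, hb.2 j c hc, smul_add]⟩

lemma gc_neg {i : ℤ} {a : R} (ha : GC ℬ i a) : GC ℬ i (-a) :=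
  ⟨neg_mem ha.1, fun j c hc => by
    rw [neg_mul, mul_neg, ha.2 j c hc, smul_neg]⟩

/-- `GC` elements of fixed degree form an additive subgroup. -/
def gcGroup (ℬ : ℤ → AddSubgroup R) [GradedRing ℬ] (i : ℤ) : AddSubgroup R where
  carrier := {a | GC ℬ i a}
  zero_mem' := gc_zero i
  add_mem' := gc_add
  neg_mem' := gc_neg

lemma gc_one : GC ℬ 0 (1 : R) :=
  ⟨SetLike.one_mem_graded ℬ, fun j b _ => by simp [sgn_zero, sgn, zero_mul]⟩

lemma gc_mul {i j : ℤ} {a b : R} (ha : GC ℬ i a) (hb : GC ℬ j b) :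
    GC ℬ (i + j) (a * b) := by
  refine ⟨SetLike.mul_mem_graded ha.1 hb.1, fun k c hc => ?_⟩
  calc a * b * c = a * (b * c) := by rw [mul_assoc]
    _ = a * (sgn (j * k) • (c * b)) := by rw [hb.2 k c hc]
    _ = sgn (j * k) • (a * c * b) := by rw [mul_smul_comm, mul_assoc]
    _ = sgn (j * k) • ((sgn (i * k) • (c * a)) * b) := by rw [ha.2 k c hc]
    _ = sgn (j * k) • sgn (i * k) • (c * (a * b)) := by rw [smul_mul_assoc, mul_assoc]
    _ = sgn ((i + j) * k) • (c * (a * b)) := by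
          rw [smul_smul, ← sgn_add, show j * k + i * k = (i + j) * k by ring]

lemma leibniz' (D : DGRingData ℬ) {i : ℤ} {a : R} (ha : a ∈ ℬ i) (b : R) :
    D.d (a * b) = D.d a * b + sgn i • (a * D.d b) := D.leibniz ha b

lemma gc_d (D : DGRingData ℬ) {i : ℤ} {a : R} (ha : GC ℬ i a) :
    GC ℬ (i + 1) (D.d a) := by
  refine ⟨D.d_mem ha.1, fun j b hb => ?_⟩
  have key : D.d a * b + sgn (i*j) • (D.d b * a)
      = sgn (i*j) • (D.d b * a) + sgn (i*j + j) • (b * D.d a) := by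
    calc D.d a * b + sgn (i*j) • (D.d b * a)
        = D.d a * b + sgn (i + i*(j+1)) • (D.d b * a) := by
          rw [show i + i*(j+1) = i*j + 2*i by ring, sgn_add_two_mul]
      _ = D.d a * b + sgn i • sgn (i*(j+1)) • (D.d b * a) := by
          rw [smul_smul, ← sgn_add]
      _ = D.d a * b + sgn i • (a * D.d b) := by
          rw [ha.2 (j+1) (D.d b) (D.d_mem hb)]
      _ = D.d (a * b) := (leibniz' D ha.1 b).symm
      _ = sgn (i*j) • D.d (b * a) := by rw [ha.2 j b hb, map_zsmul]
      _ = sgn (i*j) • (D.d b * a + sgn j • (b * D.d a)) := by rw [leibniz' D hb a]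
      _ = sgn (i*j) • (D.d b * a) + sgn (i*j + j) • (b * D.d a) := by
          rw [smul_add, smul_smul, ← sgn_add]
  rw [add_comm (D.d a * b)] at key
  have key2 := add_left_cancel key
  rw [key2, show i*j + j = (i+1)*j by ring]

/-- The subring of elements all of whose homogeneous components are graded-central. -/
def gcSubring (ℬ : ℤ → AddSubgroup R) [GradedRing ℬ] : Subring R where
  carrier := {x | ∀ i : ℤ, GC ℬ i (GradedRing.proj ℬ i x)}
  zero_mem' := fun i => by rw [map_zero]; exact gc_zero i
  add_mem' := fun hx hy i => by rw [map_add]; exact gc_add (hx i) (hy i)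
  neg_mem' := fun hx i => by rw [map_neg]; exact gc_neg (hx i)
  one_mem' := fun i => by
    by_cases h : i = 0
    · subst h
      rw [GradedRing.proj_apply, DirectSum.decompose_of_mem_same ℬ (SetLike.one_mem_graded ℬ)]
      exact gc_one
    · rw [GradedRing.proj_apply,
        DirectSum.decompose_of_mem_ne ℬ (SetLike.one_mem_graded ℬ) (fun h' => h h'.symm)]
      exact gc_zero i
  mul_mem' := by
    intro x y hx hy k
    classical
    have hxy : x * y = ∑ i ∈ (DirectSum.decompose ℬ x).support,
        ((DirectSum.decompose ℬ x i : R) * y) := by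
      rw [← Finset.sum_mul, DirectSum.sum_support_decompose]
    rw [hxy, map_sum]
    refine AddSubgroup.sum_mem (gcGroup ℬ k) fun i _ => ?_
    show GC ℬ k (GradedRing.proj ℬ k ((DirectSum.decompose ℬ x i : R) * y))
    obtain ⟨m, rfl⟩ : ∃ m, k = i + m := ⟨k - i, by ring⟩
    rw [GradedRing.proj_apply,
      DirectSum.coe_decompose_mul_add_of_left_mem ℬ (SetLike.coe_mem _)]
    exact gc_mul (hx i) (hy m)

lemma gc_proj {x : R} (hx : x ∈ grCentre ℬ) (i : ℤ) :
    GC ℬ i (GradedRing.proj ℬ i x) := by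
  have hle : grCentre ℬ ≤ gcSubring ℬ := by
    rw [grCentre]
    refine Subring.closure_le.mpr ?_
    rintro a ⟨j, hj⟩ k
    by_cases h : k = j
    · subst h
      rw [GradedRing.proj_apply, DirectSum.decompose_of_mem_same ℬ hj.1]
      exact ⟨hj.1, hj.2⟩
    · rw [GradedRing.proj_apply, DirectSum.decompose_of_mem_ne ℬ hj.1 (fun h' => h h'.symm)]
      exact gc_zero k
  exact hle hx i

lemma gc_mem_centre {i : ℤ} {a : R} (ha : GC ℬ i a) : a ∈ grCentre ℬ :=
  Subring.subset_closure ⟨i, ha.1, ha.2⟩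

lemma d_mem_centre (D : DGRingData ℬ) {x : R} (hx : x ∈ grCentre ℬ) :
    D.d x ∈ grCentre ℬ := by
  classical
  have hs : x = ∑ i ∈ (DirectSum.decompose ℬ x).support,
      (DirectSum.decompose ℬ x i : R) := (DirectSum.sum_support_decompose ℬ x).symm
  rw [hs, map_sum]
  exact Subring.sum_mem _ fun i _ => gc_mem_centre (gc_d D (gc_proj hx i))

/-- The right span `{a * z}` as an additive subgroup. -/
def rSpan (z : R) : AddSubgroup R where
  carrier := {x | ∃ a, x = a * z}
  zero_mem' := ⟨0, (zero_mul z).symm⟩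
  add_mem' := by rintro x y ⟨a, rfl⟩ ⟨b, rfl⟩; exact ⟨a + b, (add_mul a b z).symm⟩
  neg_mem' := by rintro x ⟨a, rfl⟩; exact ⟨-a, (neg_mul a z).symm⟩

/-- The left span `{z * a}` as an additive subgroup. -/
def lSpan (z : R) : AddSubgroup R where
  carrier := {x | ∃ a, x = z * a}
  zero_mem' := ⟨0, (mul_zero z).symm⟩
  add_mem' := by rintro x y ⟨a, rfl⟩ ⟨b, rfl⟩; exact ⟨a + b, (mul_add z a b).symm⟩
  neg_mem' := by rintro x ⟨a, rfl⟩; exact ⟨-a, (mul_neg z a).symm⟩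

lemma mul_mem_rSpan {i : ℤ} {z : R} (hz : GC ℬ i z) (c : R) : z * c ∈ rSpan z := by
  classical
  rw [show c = ∑ j ∈ (DirectSum.decompose ℬ c).support, (DirectSum.decompose ℬ c j : R)
      from (DirectSum.sum_support_decompose ℬ c).symm, Finset.mul_sum]
  refine AddSubgroup.sum_mem _ fun j _ => ?_
  rw [hz.2 j _ (SetLike.coe_mem _)]
  exact AddSubgroup.zsmul_mem (rSpan z) ⟨_, rfl⟩ _

lemma mem_lSpan_mul {i : ℤ} {z : R} (hz : GC ℬ i z) (c : R) : c * z ∈ lSpan z := by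
  classical
  rw [show c = ∑ j ∈ (DirectSum.decompose ℬ c).support, (DirectSum.decompose ℬ c j : R)
      from (DirectSum.sum_support_decompose ℬ c).symm, Finset.sum_mul]
  refine AddSubgroup.sum_mem _ fun j _ => ?_
  have hb : (DirectSum.decompose ℬ c j : R) * z
      = sgn (i * j) • (z * (DirectSum.decompose ℬ c j : R)) := by
    rw [hz.2 j _ (SetLike.coe_mem _), sgn_smul_smul]
  rw [hb]
  exact AddSubgroup.zsmul_mem (lSpan z) ⟨_, rfl⟩ _

lemma exists_inverse (D : DGRingData ℬ)
    (hsimple : ∀ I : AddSubgroup R, IsDGTwoSidedIdeal ℬ D I → I = ⊥ ∨ I = ⊤)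
    {i : ℤ} {z : R} (hz : GC ℬ i z) (hdz : D.d z = 0) (hz0 : z ≠ 0) :
    ∃ u : R, GC ℬ (-i) u ∧ u * z = 1 ∧ z * u = 1 := by
  classical
  -- left inverse via the right span
  have h1 : ∃ a : R, a * z = 1 := by
    have hideal : IsDGTwoSidedIdeal ℬ D (rSpan z) := by
      refine ⟨?_, ?_, ?_, ?_⟩
      · rintro a x ⟨b, rfl⟩; exact ⟨a * b, (mul_assoc a b z).symm⟩
      · rintro a x ⟨b, rfl⟩
        obtain ⟨e, he⟩ := mul_mem_rSpan hz a
        exact ⟨b * e, by rw [mul_assoc, he, mul_assoc]⟩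
      · rintro x ⟨b, rfl⟩ k
        obtain ⟨m, rfl⟩ : ∃ m, k = m + i := ⟨k - i, by ring⟩
        rw [GradedRing.proj_apply, DirectSum.coe_decompose_mul_add_of_right_mem ℬ hz.1]
        exact ⟨_, rfl⟩
      · rintro x ⟨b, rfl⟩
        rw [show b = ∑ j ∈ (DirectSum.decompose ℬ b).support, (DirectSum.decompose ℬ b j : R)
            from (DirectSum.sum_support_decompose ℬ b).symm, Finset.sum_mul, map_sum]
        refine AddSubgroup.sum_mem _ fun j _ => ?_
        rw [leibniz' D (SetLike.coe_mem (DirectSum.decompose ℬ b j)) z, hdz, mul_zero,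
          smul_zero, add_zero]
        exact ⟨_, rfl⟩
    rcases hsimple _ hideal with h | h
    · exfalso
      apply hz0
      have hzz : z ∈ rSpan z := ⟨1, (one_mul z).symm⟩
      rw [h] at hzz
      exact (AddSubgroup.mem_bot).mp hzz
    · have h1 : (1 : R) ∈ rSpan z := by rw [h]; exact AddSubgroup.mem_top 1
      obtain ⟨a, ha⟩ := h1
      exact ⟨a, ha.symm⟩
  -- right inverse via the left span
  have h2 : ∃ b : R, z * b = 1 := by
    have hideal : IsDGTwoSidedIdeal ℬ D (lSpan z) := by
      refine ⟨?_, ?_, ?_, ?_⟩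
      · rintro a x ⟨b, rfl⟩
        obtain ⟨e, he⟩ := mem_lSpan_mul hz a
        exact ⟨e * b, by rw [← mul_assoc, he, mul_assoc]⟩
      · rintro a x ⟨b, rfl⟩
        exact ⟨b * a, mul_assoc z b a⟩
      · rintro x ⟨b, rfl⟩ k
        obtain ⟨m, rfl⟩ : ∃ m, k = i + m := ⟨k - i, by ring⟩
        rw [GradedRing.proj_apply, DirectSum.coe_decompose_mul_add_of_left_mem ℬ hz.1]
        exact ⟨_, rfl⟩
      · rintro x ⟨b, rfl⟩
        rw [leibniz' D hz.1 b, hdz, zero_mul, zero_add]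
        exact AddSubgroup.zsmul_mem (lSpan z) ⟨_, rfl⟩ _
    rcases hsimple _ hideal with h | h
    · exfalso
      apply hz0
      have hzz : z ∈ lSpan z := ⟨1, (mul_one z).symm⟩
      rw [h] at hzz
      exact (AddSubgroup.mem_bot).mp hzz
    · have h1 : (1 : R) ∈ lSpan z := by rw [h]; exact AddSubgroup.mem_top 1
      obtain ⟨b, hb⟩ := h1
      exact ⟨b, hb.symm⟩
  obtain ⟨a, ha⟩ := h1
  obtain ⟨b, hb⟩ := h2
  have hab : a = b := by
    calc a = a * (z * b) := by rw [hb, mul_one]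
      _ = a * z * b := by rw [mul_assoc]
      _ = b := by rw [ha, one_mul]
  set u : R := (DirectSum.decompose ℬ a (-i) : R) with hu
  have hone : ((DirectSum.decompose ℬ (1 : R) (0 : ℤ)) : R) = 1 :=
    DirectSum.decompose_of_mem_same ℬ (SetLike.one_mem_graded ℬ)
  have hu1 : u * z = 1 := by
    have h0 := DirectSum.coe_decompose_mul_add_of_right_mem (a := a) (i := -i) ℬ hz.1
    rw [ha, show (-i) + i = 0 by ring, hone] at h0
    exact h0.symm
  have hu2 : z * u = 1 := by
    have h0 := DirectSum.coe_decompose_mul_add_of_left_mem (b := a) (j := -i) ℬ hz.1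
    rw [show z * a = 1 by rw [hab, hb], show i + (-i) = 0 by ring, hone] at h0
    exact h0.symm
  refine ⟨u, ⟨SetLike.coe_mem _, fun j b' hb' => ?_⟩, hu1, hu2⟩
  have hzb := hz.2 j b' hb'
  have hbz : b' * z = sgn (i * j) • (z * b') := by rw [hzb, sgn_smul_smul]
  calc u * b' = u * b' * (z * u) := by rw [hu2, mul_one]
    _ = u * (b' * z) * u := by simp only [mul_assoc]
    _ = u * (sgn (i * j) • (z * b')) * u := by rw [hbz]
    _ = sgn (i * j) • (u * z * (b' * u)) := by
        rw [mul_smul_comm, smul_mul_assoc]; simp only [mul_assoc]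
    _ = sgn (i * j) • (b' * u) := by rw [hu1, one_mul]
    _ = sgn (-i * j) • (b' * u) := by rw [show -i * j = -(i * j) by ring, sgn_neg]

end Stmt12Aux

open Stmt12Aux in
/-- the graded centre of a nonzero dg-simple dg-ring, with the restricted
differential, is a dg-division ring: it is nonzero and its only dg-left ideals and
dg-right ideals are `0` and `Z_gr(A)`. -/
theorem stmt_12 {A : Type*} [Ring A] [Nontrivial A] (𝒜 : ℤ → AddSubgroup A) [GradedRing 𝒜]
    (D : DGRingData 𝒜)
    (hsimple : ∀ I : AddSubgroup A, IsDGTwoSidedIdeal 𝒜 D I → I = ⊥ ∨ I = ⊤) :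
    -- the differential restricts to the graded centre
    (∀ x ∈ grCentre 𝒜, D.d x ∈ grCentre 𝒜) ∧
    -- the graded centre is nonzero
    (∃ x ∈ grCentre 𝒜, x ≠ 0) ∧
    -- every dg-left ideal of `(Z_gr(A), d)` is trivial
    (∀ I : AddSubgroup A, (I : Set A) ⊆ (grCentre 𝒜 : Set A) →
      (∀ a ∈ grCentre 𝒜, ∀ x ∈ I, a * x ∈ I) →
      (∀ x ∈ I, ∀ i : ℤ, GradedRing.proj 𝒜 i x ∈ I) →
      (∀ x ∈ I, D.d x ∈ I) →
      I = ⊥ ∨ (I : Set A) = (grCentre 𝒜 : Set A)) ∧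
    -- every dg-right ideal of `(Z_gr(A), d)` is trivial
    (∀ I : AddSubgroup A, (I : Set A) ⊆ (grCentre 𝒜 : Set A) →
      (∀ a ∈ grCentre 𝒜, ∀ x ∈ I, x * a ∈ I) →
      (∀ x ∈ I, ∀ i : ℤ, GradedRing.proj 𝒜 i x ∈ I) →
      (∀ x ∈ I, D.d x ∈ I) →
      I = ⊥ ∨ (I : Set A) = (grCentre 𝒜 : Set A)) := by
  classical
  refine ⟨fun x hx => d_mem_centre D hx, ⟨1, Subring.one_mem _, one_ne_zero⟩, ?_, ?_⟩
  · -- left ideals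
    intro I hsub hmul hproj hd
    by_cases hbot : I = ⊥
    · exact Or.inl hbot
    right
    obtain ⟨x, hxI, hx0⟩ : ∃ x ∈ I, x ≠ 0 := by
      by_contra h
      push_neg at h
      exact hbot (by
        ext y
        simp only [AddSubgroup.mem_bot]
        exact ⟨fun hy => h y hy, fun hy => hy ▸ I.zero_mem⟩)
    obtain ⟨i, hpi⟩ : ∃ i, GradedRing.proj 𝒜 i x ≠ 0 := by
      by_contra h
      push_neg at h
      apply hx0
      rw [← DirectSum.sum_support_decompose 𝒜 x]
      exact Finset.sum_eq_zero fun j _ => h j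
    have hz0I : GradedRing.proj 𝒜 i x ∈ I := hproj x hxI i
    have hgc0 : GC 𝒜 i (GradedRing.proj 𝒜 i x) := gc_proj (hsub hxI) i
    obtain ⟨k, z, hzI, hgc, hdz, hzne⟩ :
        ∃ k z, z ∈ I ∧ GC 𝒜 k z ∧ D.d z = 0 ∧ z ≠ 0 := by
      by_cases hd0 : D.d (GradedRing.proj 𝒜 i x) = 0
      · exact ⟨i, _, hz0I, hgc0, hd0, hpi⟩
      · exact ⟨i + 1, _, hd _ hz0I, gc_d D hgc0, D.d_sq _, hd0⟩
    obtain ⟨u, hu, hu1, _⟩ := exists_inverse D hsimple hgc hdz hzne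
    have h1I : (1 : A) ∈ I := by rw [← hu1]; exact hmul u (gc_mem_centre hu) z hzI
    refine Set.Subset.antisymm hsub fun c hc => ?_
    have := hmul c hc 1 h1I
    rwa [mul_one] at this
  · -- right ideals
    intro I hsub hmul hproj hd
    by_cases hbot : I = ⊥
    · exact Or.inl hbot
    right
    obtain ⟨x, hxI, hx0⟩ : ∃ x ∈ I, x ≠ 0 := by
      by_contra h
      push_neg at h
      exact hbot (by
        ext y
        simp only [AddSubgroup.mem_bot]
        exact ⟨fun hy => h y hy, fun hy => hy ▸ I.zero_mem⟩)
    obtain ⟨i, hpi⟩ : ∃ i, GradedRing.proj 𝒜 i x ≠ 0 := by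
      by_contra h
      push_neg at h
      apply hx0
      rw [← DirectSum.sum_support_decompose 𝒜 x]
      exact Finset.sum_eq_zero fun j _ => h j
    have hz0I : GradedRing.proj 𝒜 i x ∈ I := hproj x hxI i
    have hgc0 : GC 𝒜 i (GradedRing.proj 𝒜 i x) := gc_proj (hsub hxI) i
    obtain ⟨k, z, hzI, hgc, hdz, hzne⟩ :
        ∃ k z, z ∈ I ∧ GC 𝒜 k z ∧ D.d z = 0 ∧ z ≠ 0 := by
      by_cases hd0 : D.d (GradedRing.proj 𝒜 i x) = 0
      · exact ⟨i, _, hz0I, hgc0, hd0, hpi⟩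
      · exact ⟨i + 1, _, hd _ hz0I, gc_d D hgc0, D.d_sq _, hd0⟩
    obtain ⟨u, hu, _, hu2⟩ := exists_inverse D hsimple hgc hdz hzne
    have h1I : (1 : A) ∈ I := by rw [← hu2]; exact hmul u (gc_mem_centre hu) z hzI
    refine Set.Subset.antisymm hsub fun c hc => ?_
    have := hmul c hc 1 h1I
    rwa [one_mul] at this
end

section
/- Let K be a commutative ring and let (A,d_A) and (B,d_B) be acyclic dg-K-algebras. Let z ∈ A_{−1} with d_A(z) = 1 and w ∈ B_{−1} with d_B(w) = 1, and let C ⊆ A ⊗_K B be the additive subgroup generated by the simple tensors a⊗b with d_A(a) = 0 and d_B(b) = 0 (the image of ker(d_A) ⊗_K ker(d_B)). Then ker(d_{A⊗B}) = C ⊕ (1⊗w − z⊗1)·C, an internal direct sum of additive subgroups of A ⊗_K B. -/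
section AuxOps

variable {K : Type*} [CommRing K] {A : Type*} [Ring A] [Algebra K A]
  {B : Type*} [Ring B] [Algebra K B] {C : Type*} [Ring C] [Algebra K C]

noncomputable def liftOp (f : A →ₗ[K] B →ₗ[K] C)
    (hbij : Function.Bijective (TensorProduct.lift f))
    (g : A →ₗ[K] A) (h : B →ₗ[K] B) : C →ₗ[K] C :=
  (TensorProduct.lift (f.compl₁₂ g h)).comp
    (LinearEquiv.ofBijective (TensorProduct.lift f) hbij).symm.toLinearMap

lemma liftOp_lift (f : A →ₗ[K] B →ₗ[K] C) (hbij : Function.Bijective (TensorProduct.lift f))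
    (g : A →ₗ[K] A) (h : B →ₗ[K] B) (x : TensorProduct K A B) :
    liftOp f hbij g h (TensorProduct.lift f x) = TensorProduct.lift (f.compl₁₂ g h) x := by
  have h1 : TensorProduct.lift f x = (LinearEquiv.ofBijective (TensorProduct.lift f) hbij) x := rfl
  simp only [liftOp, LinearMap.coe_comp, Function.comp_apply, LinearEquiv.coe_coe,
    LinearEquiv.coe_toLinearMap]
  rw [h1, LinearEquiv.symm_apply_apply]

lemma liftOp_apply (f : A →ₗ[K] B →ₗ[K] C) (hbij : Function.Bijective (TensorProduct.lift f))
    (g : A →ₗ[K] A) (h : B →ₗ[K] B) (a : A) (b : B) :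
    liftOp f hbij g h (f a b) = f (g a) (h b) := by
  have h1 : f a b = TensorProduct.lift f (a ⊗ₜ[K] b) := (TensorProduct.lift.tmul a b).symm
  rw [h1, liftOp_lift, TensorProduct.lift.tmul, LinearMap.compl₁₂_apply]

lemma liftOp_mem (f : A →ₗ[K] B →ₗ[K] C) (hbij : Function.Bijective (TensorProduct.lift f))
    (g : A →ₗ[K] A) (h : B →ₗ[K] B) (G : AddSubgroup C)
    (hG : ∀ (a : A) (b : B), f (g a) (h b) ∈ G) (c : C) : liftOp f hbij g h c ∈ G := by
  obtain ⟨x, rfl⟩ := hbij.2 c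
  rw [liftOp_lift]
  induction x using TensorProduct.induction_on with
  | zero => simpa using G.zero_mem
  | tmul a b => simpa [TensorProduct.lift.tmul, LinearMap.compl₁₂_apply] using hG a b
  | add x y hx hy => rw [map_add]; exact G.add_mem hx hy

lemma liftOp_four (f : A →ₗ[K] B →ₗ[K] C) (hbij : Function.Bijective (TensorProduct.lift f))
    (g g' : A →ₗ[K] A) (h h' : B →ₗ[K] B)
    (hg : ∀ a, g a + g' a = a) (hh : ∀ b, h b + h' b = b) (c : C) :
    liftOp f hbij g h c + liftOp f hbij g h' c + liftOp f hbij g' h c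
      + liftOp f hbij g' h' c = c := by
  obtain ⟨x, rfl⟩ := hbij.2 c
  rw [liftOp_lift, liftOp_lift, liftOp_lift, liftOp_lift]
  induction x using TensorProduct.induction_on with
  | zero => simp
  | tmul a b =>
      simp only [TensorProduct.lift.tmul, LinearMap.compl₁₂_apply]
      rw [add_assoc (f (g a) (h b) + f (g a) (h' b))]
      rw [← map_add (f (g a)), hh b, ← map_add (f (g' a)), hh b, ← LinearMap.map_add₂, hg a]
  | add x y hx hy => simp only [map_add]; rw [← hx, ← hy]; abel

end AuxOps


lemma d_proj_eq_zero {A : Type*} [Ring A] (𝒜 : ℤ → AddSubgroup A) [GradedRing 𝒜]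
    (D : DGRingData 𝒜) {a : A} (ha : D.d a = 0) (i : ℤ) :
    D.d (DirectSum.decompose 𝒜 a i : A) = 0 := by
  classical
  have hsum : ∑ j ∈ (DirectSum.decompose 𝒜 a).support, D.d (DirectSum.decompose 𝒜 a j : A)
      = 0 := by
    rw [← map_sum, DirectSum.sum_support_decompose 𝒜 a, ha]
  have hproj : ∀ j ∈ (DirectSum.decompose 𝒜 a).support,
      GradedRing.proj 𝒜 (i + 1) (D.d (DirectSum.decompose 𝒜 a j : A)) =
      if j = i then D.d (DirectSum.decompose 𝒜 a j : A) else 0 := by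
    intro j _
    have hmem : D.d (DirectSum.decompose 𝒜 a j : A) ∈ 𝒜 (j + 1) := D.d_mem (SetLike.coe_mem _)
    by_cases hj : j = i
    · subst hj
      rw [if_pos rfl, GradedRing.proj_apply, DirectSum.decompose_of_mem_same 𝒜 hmem]
    · rw [if_neg hj, GradedRing.proj_apply,
        DirectSum.decompose_of_mem_ne 𝒜 hmem (show j + 1 ≠ i + 1 by omega)]
  have h2 : GradedRing.proj 𝒜 (i + 1)
      (∑ j ∈ (DirectSum.decompose 𝒜 a).support, D.d (DirectSum.decompose 𝒜 a j : A)) = 0 := by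
    rw [hsum, map_zero]
  rw [map_sum, Finset.sum_congr rfl hproj, Finset.sum_ite_eq'] at h2
  by_cases hi : i ∈ (DirectSum.decompose 𝒜 a).support
  · rwa [if_pos hi] at h2
  · have h0 : (DirectSum.decompose 𝒜 a) i = 0 := DFinsupp.notMem_support_iff.mp hi
    rw [h0, ZeroMemClass.coe_zero, map_zero]

variable {A : Type*} [Ring A] (𝒜 : ℤ → AddSubgroup A) [GradedRing 𝒜] (D : DGRingData 𝒜)

/-- for acyclic dg-`K`-algebras `A`, `B` with homogeneous `z ∈ A_{-1}`,
`w ∈ B_{-1}` such that `d_A z = 1` and `d_B w = 1`, the cycles of the graded tensor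
product `A ⊗_K B` decompose as `ker(d_{A⊗B}) = C₀ ⊕ (1⊗w − z⊗1)·C₀`, where `C₀` is the
additive subgroup generated by the tensors of cycles.  The graded tensor product is
presented as a `K`-algebra `C` together with a `K`-bilinear map `f : A → B → C`
inducing a `K`-module isomorphism `A ⊗[K] B ≃ C`, carrying the twisted multiplication
and the differential. -/
theorem stmt_17 {K : Type*} [CommRing K]
    {A : Type*} [Ring A] [Algebra K A] (𝒜 : ℤ → AddSubgroup A) [GradedRing 𝒜]
    (DA : DGRingData 𝒜) (hDA : ∀ (k : K) (a : A), DA.d (k • a) = k • DA.d a)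
    (hAacyc : ∀ a : A, DA.d a = 0 → ∃ b : A, DA.d b = a)
    {B : Type*} [Ring B] [Algebra K B] (ℬ : ℤ → AddSubgroup B) [GradedRing ℬ]
    (DB : DGRingData ℬ) (hDB : ∀ (k : K) (b : B), DB.d (k • b) = k • DB.d b)
    (hBacyc : ∀ b : B, DB.d b = 0 → ∃ a : B, DB.d a = b)
    -- the graded tensor product `C = A ⊗_K B`:
    {C : Type*} [Ring C] [Algebra K C] (f : A →ₗ[K] B →ₗ[K] C)
    (hbij : Function.Bijective (TensorProduct.lift f))
    (hone : f 1 1 = 1)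
    (hmul : ∀ (i j : ℤ) (a₁ a₂ : A) (b₁ b₂ : B), b₁ ∈ ℬ i → a₂ ∈ 𝒜 j →
      f a₁ b₁ * f a₂ b₂ = (((-1 : ℤˣ) ^ (i * j) : ℤˣ) : ℤ) • f (a₁ * a₂) (b₁ * b₂))
    -- its differential:
    (dC : C →+ C) (hdsq : ∀ c : C, dC (dC c) = 0)
    (hdC : ∀ (i : ℤ) (a : A) (b : B), a ∈ 𝒜 i →
      dC (f a b) = f (DA.d a) b + (((-1 : ℤˣ) ^ i : ℤˣ) : ℤ) • f a (DB.d b))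
    -- the distinguished elements:
    (z : A) (hz : z ∈ 𝒜 (-1)) (hdz : DA.d z = 1)
    (w : B) (hw : w ∈ ℬ (-1)) (hdw : DB.d w = 1) :
    -- `ker(d_{A⊗B}) = C₀ ⊕ (1⊗w − z⊗1)·C₀` as an internal direct sum:
    (AddSubgroup.closure {c : C | ∃ (a : A) (b : B), DA.d a = 0 ∧ DB.d b = 0 ∧ f a b = c}) ⊓
      ((AddSubgroup.closure {c : C | ∃ (a : A) (b : B), DA.d a = 0 ∧ DB.d b = 0 ∧ f a b = c}).map
        (AddMonoidHom.mulLeft (f 1 w - f z 1))) = ⊥ ∧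
    (AddSubgroup.closure {c : C | ∃ (a : A) (b : B), DA.d a = 0 ∧ DB.d b = 0 ∧ f a b = c}) ⊔
      ((AddSubgroup.closure {c : C | ∃ (a : A) (b : B), DA.d a = 0 ∧ DB.d b = 0 ∧ f a b = c}).map
        (AddMonoidHom.mulLeft (f 1 w - f z 1))) = dC.ker := by
  classical
  set t : C := f 1 w - f z 1 with ht
  -- basic sign facts
  have hneg1 : (((-1 : ℤˣ) ^ (-1 : ℤ) : ℤˣ) : ℤ) = -1 := by decide
  have hm1inv : ((-1 : ℤˣ))⁻¹ = -1 := by decide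
  have hinv : ∀ i : ℤ, ((-1 : ℤˣ) ^ ((-1 : ℤ) * i)) = ((-1 : ℤˣ) ^ i)⁻¹ := fun i => by
    rw [neg_one_mul, zpow_neg]
  have hcancel : ∀ (i : ℤ) (x : C),
      (((-1 : ℤˣ) ^ ((-1 : ℤ) * i) : ℤˣ) : ℤ) • ((((-1 : ℤˣ) ^ i) : ℤˣ) : ℤ) • x = x := by
    intro i x
    rw [hinv]
    rcases Int.units_eq_one_or ((-1 : ℤˣ) ^ i) with h | h <;> rw [h] <;> simp [hm1inv]
  have hcancel' : ∀ (i : ℤ) (x : C),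
      ((((-1 : ℤˣ) ^ i) : ℤˣ) : ℤ) • (((-1 : ℤˣ) ^ ((-1 : ℤ) * i) : ℤˣ) : ℤ) • x = x := by
    intro i x
    rw [hinv]
    rcases Int.units_eq_one_or ((-1 : ℤˣ) ^ i) with h | h <;> rw [h] <;> simp [hm1inv]
  -- Leibniz consequences
  have hlzA : ∀ a : A, DA.d (z * a) = a - z * DA.d a := by
    intro a
    rw [DA.leibniz hz a, hdz, one_mul, hneg1, neg_one_zsmul, ← sub_eq_add_neg]
  have hlzB : ∀ b : B, DB.d (w * b) = b - w * DB.d b := by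
    intro b
    rw [DB.leibniz hw b, hdw, one_mul, hneg1, neg_one_zsmul, ← sub_eq_add_neg]
  have hdza : ∀ a : A, DA.d a = 0 → DA.d (z * a) = a := fun a h => by
    rw [hlzA, h, mul_zero, sub_zero]
  have hdwb : ∀ b : B, DB.d b = 0 → DB.d (w * b) = b := fun b h => by
    rw [hlzB, h, mul_zero, sub_zero]
  have hzza : ∀ a : A, DA.d a = 0 → DA.d (z * (z * a)) = 0 := fun a h => by
    rw [hlzA, hdza a h, sub_self]
  have hwwb : ∀ b : B, DB.d b = 0 → DB.d (w * (w * b)) = 0 := fun b h => by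
    rw [hlzB, hdwb b h, sub_self]
  -- the homogeneous-cycle subgroups
  set G0 : AddSubgroup C := AddSubgroup.closure
    {c : C | ∃ (i : ℤ) (a : A) (b : B), a ∈ 𝒜 i ∧ DA.d a = 0 ∧ DB.d b = 0 ∧ f a b = c}
    with hG0def
  set G1 : AddSubgroup C := AddSubgroup.closure
    {c : C | ∃ (i : ℤ) (a : A) (b : B), a ∈ 𝒜 i ∧ DA.d a = 0 ∧ DB.d b = 0 ∧ f a (w * b) = c}
    with hG1def
  set G2 : AddSubgroup C := AddSubgroup.closure
    {c : C | ∃ (i : ℤ) (a : A) (b : B), a ∈ 𝒜 i ∧ DA.d a = 0 ∧ DB.d b = 0 ∧ f (z * a) b = c}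
    with hG2def
  set G3 : AddSubgroup C := AddSubgroup.closure
    {c : C | ∃ (i : ℤ) (a : A) (b : B), a ∈ 𝒜 i ∧ DA.d a = 0 ∧ DB.d b = 0 ∧ f (z * a) (w * b) = c}
    with hG3def
  -- decomposition of cycles into homogeneous cycles
  have helperA : ∀ (G : AddSubgroup C) (F : A →+ C) (a : A), DA.d a = 0 →
      (∀ (i : ℤ) (a' : A), a' ∈ 𝒜 i → DA.d a' = 0 → F a' ∈ G) → F a ∈ G := by
    intro G F a ha hF
    rw [← DirectSum.sum_support_decompose 𝒜 a, map_sum]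
    exact AddSubgroup.sum_mem G fun i _ =>
      hF i _ (SetLike.coe_mem _) (d_proj_eq_zero 𝒜 DA ha i)
  -- the closure in the statement is G0
  have hSG0 : AddSubgroup.closure
      {c : C | ∃ (a : A) (b : B), DA.d a = 0 ∧ DB.d b = 0 ∧ f a b = c} = G0 := by
    apply le_antisymm
    · rw [AddSubgroup.closure_le]
      rintro c ⟨a, b, ha, hb, rfl⟩
      exact helperA G0 (AddMonoidHom.mk' (fun x => f x b)
          (fun u v => by simp [map_add])) a ha
        (fun i a' hi ha' => AddSubgroup.subset_closure ⟨i, a', b, hi, ha', hb, rfl⟩)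
    · rw [hG0def, AddSubgroup.closure_le]
      rintro c ⟨i, a, b, hi, ha, hb, rfl⟩
      exact AddSubgroup.subset_closure ⟨a, b, ha, hb, rfl⟩
  -- elementary differential computations
  have hd0 : ∀ (i : ℤ) (a : A) (b : B), a ∈ 𝒜 i → DA.d a = 0 → DB.d b = 0 →
      dC (f a b) = 0 := by
    intro i a b hi ha hb
    rw [hdC i a b hi, ha, hb, LinearMap.map_zero₂, map_zero, smul_zero, zero_add]
  have hd1 : ∀ (i : ℤ) (a : A) (b : B), a ∈ 𝒜 i → DA.d a = 0 → DB.d b = 0 →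
      dC (f a (w * b)) = (((-1 : ℤˣ) ^ i : ℤˣ) : ℤ) • f a b := by
    intro i a b hi ha hb
    rw [hdC i a (w * b) hi, ha, hdwb b hb, LinearMap.map_zero₂, zero_add]
  have hd2 : ∀ (i : ℤ) (a : A) (b : B), a ∈ 𝒜 i → DA.d a = 0 → DB.d b = 0 →
      dC (f (z * a) b) = f a b := by
    intro i a b hi ha hb
    rw [hdC (-1 + i) (z * a) b (SetLike.mul_mem_graded hz hi), hdza a ha, hb, map_zero,
      smul_zero, add_zero]
  have hd3 : ∀ (i : ℤ) (a : A) (b : B), a ∈ 𝒜 i → DA.d a = 0 → DB.d b = 0 →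
      dC (f (z * a) (w * b)) = f a (w * b)
        + (((-1 : ℤˣ) ^ (-1 + i) : ℤˣ) : ℤ) • f (z * a) b := by
    intro i a b hi ha hb
    rw [hdC (-1 + i) (z * a) (w * b) (SetLike.mul_mem_graded hz hi), hdza a ha, hdwb b hb]
  have ht0 : ∀ (i : ℤ) (a : A) (b : B), a ∈ 𝒜 i →
      t * f a b = (((-1 : ℤˣ) ^ ((-1 : ℤ) * i) : ℤˣ) : ℤ) • f a (w * b) - f (z * a) b := by
    intro i a b hi
    rw [ht, sub_mul, hmul (-1) i 1 a w b hw hi,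
      hmul 0 i z a 1 b (SetLike.one_mem_graded ℬ) hi]
    simp only [one_mul, mul_one, zero_mul, zpow_zero, Units.val_one, one_smul]
  
  have hmemG0 : ∀ (i : ℤ) (a : A) (b : B), a ∈ 𝒜 i → DA.d a = 0 → DB.d b = 0 →
      f a b ∈ G0 := fun i a b hi ha hb => by
    rw [hG0def]; exact AddSubgroup.subset_closure ⟨i, a, b, hi, ha, hb, rfl⟩
  -- the component linear maps
  obtain ⟨gm, hgm⟩ : ∃ g : A →ₗ[K] A, ∀ a, g a = DA.d (z * a) :=
    ⟨{ toFun := fun a => DA.d (z * a),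
       map_add' := fun x y => by simp [mul_add, map_add],
       map_smul' := fun k x => by
         simp [Algebra.mul_smul_comm, hDA] }, fun a => rfl⟩
  obtain ⟨gn, hgn⟩ : ∃ g : A →ₗ[K] A, ∀ a, g a = z * DA.d a :=
    ⟨{ toFun := fun a => z * DA.d a,
       map_add' := fun x y => by simp [map_add, mul_add],
       map_smul' := fun k x => by
         simp [Algebra.mul_smul_comm, hDA] }, fun a => rfl⟩
  obtain ⟨gz, hgz⟩ : ∃ g : A →ₗ[K] A, ∀ a, g a = z * DA.d (z * a) :=
    ⟨{ toFun := fun a => z * DA.d (z * a),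
       map_add' := fun x y => by simp [mul_add, map_add],
       map_smul' := fun k x => by
         simp [Algebra.mul_smul_comm, hDA] }, fun a => rfl⟩
  obtain ⟨hmB, hhm⟩ : ∃ h : B →ₗ[K] B, ∀ b, h b = DB.d (w * b) :=
    ⟨{ toFun := fun b => DB.d (w * b),
       map_add' := fun x y => by simp [mul_add, map_add],
       map_smul' := fun k x => by
         simp [Algebra.mul_smul_comm, hDB] }, fun b => rfl⟩
  obtain ⟨hnB, hhn⟩ : ∃ h : B →ₗ[K] B, ∀ b, h b = w * DB.d b :=
    ⟨{ toFun := fun b => w * DB.d b,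
       map_add' := fun x y => by simp [map_add, mul_add],
       map_smul' := fun k x => by
         simp [Algebra.mul_smul_comm, hDB] }, fun b => rfl⟩
  have hgsum : ∀ a, gm a + gn a = a := fun a => by rw [hgm, hgn, hlzA]; abel
  have hhsum : ∀ b, hmB b + hnB b = b := fun b => by rw [hhm, hhn, hlzB]; abel
  -- the four projection operators, plus the auxiliary operators Z and T
  obtain ⟨Pop, Q1, Q2, Q3, Zop, Top, hPapp, hQ1app, hQ2app, hQ3app, hZapp, hTapp,
      hPrange, hQ1range, hQ2range, hQ3range, hdecomp⟩ :
    ∃ Pop Q1 Q2 Q3 Zop Top : C →+ C,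
      (∀ (a : A) (b : B), Pop (f a b) = f (DA.d (z * a)) (DB.d (w * b))) ∧
      (∀ (a : A) (b : B), Q1 (f a b) = f (DA.d (z * a)) (w * DB.d b)) ∧
      (∀ (a : A) (b : B), Q2 (f a b) = f (z * DA.d a) (DB.d (w * b))) ∧
      (∀ (a : A) (b : B), Q3 (f a b) = f (z * DA.d a) (w * DB.d b)) ∧
      (∀ (a : A) (b : B), Zop (f a b) = f (z * DA.d (z * a)) (DB.d (w * b))) ∧
      (∀ (a : A) (b : B), Top (f a b) = f (z * DA.d (z * a)) b) ∧
      (∀ c, Pop c ∈ G0) ∧ (∀ c, Q1 c ∈ G1) ∧ (∀ c, Q2 c ∈ G2) ∧ (∀ c, Q3 c ∈ G3) ∧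
      (∀ c, Pop c + Q1 c + Q2 c + Q3 c = c) := by
    refine ⟨(liftOp f hbij gm hmB).toAddMonoidHom, (liftOp f hbij gm hnB).toAddMonoidHom,
      (liftOp f hbij gn hmB).toAddMonoidHom, (liftOp f hbij gn hnB).toAddMonoidHom,
      (liftOp f hbij gz hmB).toAddMonoidHom, (liftOp f hbij gz LinearMap.id).toAddMonoidHom,
      ?_, ?_, ?_, ?_, ?_, ?_, ?_, ?_, ?_, ?_, ?_⟩
    · intro a b
      show liftOp f hbij gm hmB (f a b) = _
      rw [liftOp_apply, hgm, hhm]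
    · intro a b
      show liftOp f hbij gm hnB (f a b) = _
      rw [liftOp_apply, hgm, hhn]
    · intro a b
      show liftOp f hbij gn hmB (f a b) = _
      rw [liftOp_apply, hgn, hhm]
    · intro a b
      show liftOp f hbij gn hnB (f a b) = _
      rw [liftOp_apply, hgn, hhn]
    · intro a b
      show liftOp f hbij gz hmB (f a b) = _
      rw [liftOp_apply, hgz, hhm]
    · intro a b
      show liftOp f hbij gz LinearMap.id (f a b) = _
      rw [liftOp_apply, hgz, LinearMap.id_apply]
    · intro c
      show liftOp f hbij gm hmB c ∈ G0
      refine liftOp_mem f hbij gm hmB G0 (fun a b => ?_) c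
      rw [hgm, hhm, hG0def]
      exact helperA _ (AddMonoidHom.mk' (fun x => f x (DB.d (w * b)))
          (fun u v => by simp [map_add])) (DA.d (z * a)) (DA.d_sq _)
        (fun i a' hi ha' =>
          AddSubgroup.subset_closure ⟨i, a', DB.d (w * b), hi, ha', DB.d_sq _, rfl⟩)
    · intro c
      show liftOp f hbij gm hnB c ∈ G1
      refine liftOp_mem f hbij gm hnB G1 (fun a b => ?_) c
      rw [hgm, hhn, hG1def]
      exact helperA _ (AddMonoidHom.mk' (fun x => f x (w * DB.d b))
          (fun u v => by simp [map_add])) (DA.d (z * a)) (DA.d_sq _)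
        (fun i a' hi ha' =>
          AddSubgroup.subset_closure ⟨i, a', DB.d b, hi, ha', DB.d_sq _, rfl⟩)
    · intro c
      show liftOp f hbij gn hmB c ∈ G2
      refine liftOp_mem f hbij gn hmB G2 (fun a b => ?_) c
      rw [hgn, hhm, hG2def]
      exact helperA _ (AddMonoidHom.mk' (fun x => f (z * x) (DB.d (w * b)))
          (fun u v => by simp [mul_add, map_add])) (DA.d a) (DA.d_sq _)
        (fun i a' hi ha' =>
          AddSubgroup.subset_closure ⟨i, a', DB.d (w * b), hi, ha', DB.d_sq _, rfl⟩)
    · intro c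
      show liftOp f hbij gn hnB c ∈ G3
      refine liftOp_mem f hbij gn hnB G3 (fun a b => ?_) c
      rw [hgn, hhn, hG3def]
      exact helperA _ (AddMonoidHom.mk' (fun x => f (z * x) (w * DB.d b))
          (fun u v => by simp [mul_add, map_add])) (DA.d a) (DA.d_sq _)
        (fun i a' hi ha' =>
          AddSubgroup.subset_closure ⟨i, a', DB.d b, hi, ha', DB.d_sq _, rfl⟩)
    · intro c
      show liftOp f hbij gm hmB c + liftOp f hbij gm hnB c + liftOp f hbij gn hmB c
          + liftOp f hbij gn hnB c = c
      exact liftOp_four f hbij gm gn hmB hnB hgsum hhsum c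
  
  -- closure induction facts
  have hF1 : ∀ x ∈ G0, dC x = 0 := by
    intro x hx
    rw [hG0def] at hx
    refine AddSubgroup.closure_induction ?_ ?_ ?_ ?_ hx
    · rintro c ⟨i, a, b, hi, ha, hb, rfl⟩
      exact hd0 i a b hi ha hb
    · exact map_zero dC
    · intro u v hu hv pu pv; rw [map_add, pu, pv, add_zero]
    · intro u hu pu; rw [map_neg, pu, neg_zero]
  have hPid : ∀ x ∈ G0, Pop x = x := by
    intro x hx
    rw [hG0def] at hx
    refine AddSubgroup.closure_induction ?_ ?_ ?_ ?_ hx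
    · rintro c ⟨i, a, b, hi, ha, hb, rfl⟩
      rw [hPapp, hdza a ha, hdwb b hb]
    · exact map_zero Pop
    · intro u v hu hv pu pv; rw [map_add, pu, pv]
    · intro u hu pu; rw [map_neg, pu]
  have hPt0 : ∀ x ∈ G0, Pop (t * x) = 0 := by
    intro x hx
    rw [hG0def] at hx
    refine AddSubgroup.closure_induction ?_ ?_ ?_ ?_ hx
    · rintro c ⟨i, a, b, hi, ha, hb, rfl⟩
      rw [ht0 i a b hi, map_sub, AddMonoidHom.map_zsmul, hPapp a (w * b), hPapp (z * a) b,
        hwwb b hb, hzza a ha, map_zero (f (DA.d (z * a))), LinearMap.map_zero₂, smul_zero,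
        sub_zero]
    · rw [mul_zero, map_zero]
    · intro u v hu hv pu pv; rw [mul_add, map_add, pu, pv, add_zero]
    · intro u hu pu; rw [mul_neg, map_neg, pu, neg_zero]
  have hQ1G0 : ∀ x ∈ G0, Q1 x = 0 := by
    intro x hx
    rw [hG0def] at hx
    refine AddSubgroup.closure_induction ?_ ?_ ?_ ?_ hx
    · rintro c ⟨i, a, b, hi, ha, hb, rfl⟩
      rw [hQ1app, hb, mul_zero, map_zero]
    · exact map_zero Q1
    · intro u v hu hv pu pv; rw [map_add, pu, pv, add_zero]
    · intro u hu pu; rw [map_neg, pu, neg_zero]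
  have hdt : ∀ x ∈ G0, dC (t * x) = 0 := by
    intro x hx
    rw [hG0def] at hx
    refine AddSubgroup.closure_induction ?_ ?_ ?_ ?_ hx
    · rintro c ⟨i, a, b, hi, ha, hb, rfl⟩
      rw [ht0 i a b hi, map_sub, AddMonoidHom.map_zsmul, hd1 i a b hi ha hb,
        hd2 i a b hi ha hb, hcancel i, sub_self]
    · rw [mul_zero, map_zero]
    · intro u v hu hv pu pv; rw [mul_add, map_add, pu, pv, add_zero]
    · intro u hu pu; rw [mul_neg, map_neg, pu, neg_zero]
  have hdG1 : ∀ x ∈ G1, dC x ∈ G0 := by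
    intro x hx
    rw [hG1def] at hx
    refine AddSubgroup.closure_induction ?_ ?_ ?_ ?_ hx
    · rintro c ⟨i, a, b, hi, ha, hb, rfl⟩
      rw [hd1 i a b hi ha hb]
      exact AddSubgroup.zsmul_mem G0 (hmemG0 i a b hi ha hb) _
    · rw [map_zero]; exact G0.zero_mem
    · intro u v hu hv pu pv; rw [map_add]; exact G0.add_mem pu pv
    · intro u hu pu; rw [map_neg]; exact G0.neg_mem pu
  have hdG2 : ∀ x ∈ G2, dC x ∈ G0 := by
    intro x hx
    rw [hG2def] at hx
    refine AddSubgroup.closure_induction ?_ ?_ ?_ ?_ hx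
    · rintro c ⟨i, a, b, hi, ha, hb, rfl⟩
      rw [hd2 i a b hi ha hb]
      exact hmemG0 i a b hi ha hb
    · rw [map_zero]; exact G0.zero_mem
    · intro u v hu hv pu pv; rw [map_add]; exact G0.add_mem pu pv
    · intro u hu pu; rw [map_neg]; exact G0.neg_mem pu
  have hG1dec : ∀ x ∈ G1, x = t * dC x + Zop (dC x) := by
    intro x hx
    rw [hG1def] at hx
    refine AddSubgroup.closure_induction ?_ ?_ ?_ ?_ hx
    · rintro c ⟨i, a, b, hi, ha, hb, rfl⟩
      rw [hd1 i a b hi ha hb, mul_smul_comm, AddMonoidHom.map_zsmul, hZapp a b, hdza a ha,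
        hdwb b hb, ht0 i a b hi, smul_sub, hcancel' i]
      abel
    · simp
    · intro u v hu hv pu pv
      conv_lhs => rw [pu, pv]
      rw [map_add dC, mul_add, map_add Zop]
      abel
    · intro u hu pu
      conv_lhs => rw [pu]
      rw [map_neg dC, mul_neg, map_neg Zop]
      abel
  have hG2dec : ∀ x ∈ G2, x = Zop (dC x) := by
    intro x hx
    rw [hG2def] at hx
    refine AddSubgroup.closure_induction ?_ ?_ ?_ ?_ hx
    · rintro c ⟨i, a, b, hi, ha, hb, rfl⟩
      rw [hd2 i a b hi ha hb, hZapp a b, hdza a ha, hdwb b hb]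
    · simp
    · intro u v hu hv pu pv
      conv_lhs => rw [pu, pv]
      rw [map_add dC, map_add Zop]
    · intro u hu pu
      conv_lhs => rw [pu]
      rw [map_neg dC, map_neg Zop]
  have hG3dec : ∀ x ∈ G3, x = Top (Q1 (dC x)) := by
    intro x hx
    rw [hG3def] at hx
    refine AddSubgroup.closure_induction ?_ ?_ ?_ ?_ hx
    · rintro c ⟨i, a, b, hi, ha, hb, rfl⟩
      rw [hd3 i a b hi ha hb, map_add Q1, AddMonoidHom.map_zsmul Q1, hQ1app a (w * b),
        hQ1app (z * a) b, hb, mul_zero, map_zero (f (DA.d (z * (z * a)))), smul_zero,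
        add_zero, hdza a ha, hdwb b hb, hTapp a (w * b), hdza a ha]
    · simp
    · intro u v hu hv pu pv
      conv_lhs => rw [pu, pv]
      rw [map_add dC, map_add Q1, map_add Top]
    · intro u hu pu
      conv_lhs => rw [pu]
      rw [map_neg dC, map_neg Q1, map_neg Top]
  -- assembly
  constructor
  · rw [hSG0, eq_bot_iff]
    intro x hx
    obtain ⟨hx0, hxt⟩ := AddSubgroup.mem_inf.mp hx
    rw [AddSubgroup.mem_map] at hxt
    obtain ⟨y, hy, hyx⟩ := hxt
    have hyx' : t * y = x := hyx
    have h1 : Pop (t * y) = t * y := hPid _ (hyx' ▸ hx0)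
    rw [AddSubgroup.mem_bot, ← hyx', ← h1]
    exact hPt0 y hy
  · rw [hSG0]
    apply le_antisymm
    · rw [sup_le_iff]
      constructor
      · intro x hx
        rw [AddMonoidHom.mem_ker]
        exact hF1 x hx
      · intro x hx
        rw [AddSubgroup.mem_map] at hx
        obtain ⟨y, hy, hyx⟩ := hx
        have hyx' : t * y = x := hyx
        rw [AddMonoidHom.mem_ker, ← hyx']
        exact hdt y hy
    · intro c hc
      rw [AddMonoidHom.mem_ker] at hc
      have hq3 : Q3 c = 0 := by
        have hsum : dC (Q1 c) + dC (Q2 c) + dC (Q3 c) = 0 := by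
          have h := congrArg (fun u => dC u) (hdecomp c)
          simp only [map_add] at h
          rw [hF1 _ (hPrange c), hc, zero_add] at h
          exact h
        have e1 : dC (Q3 c) = -(dC (Q1 c) + dC (Q2 c)) :=
          eq_neg_of_add_eq_zero_right hsum
        have e2 : Q1 (dC (Q3 c)) = 0 := by
          rw [e1, map_neg, map_add, hQ1G0 _ (hdG1 _ (hQ1range c)),
            hQ1G0 _ (hdG2 _ (hQ2range c)), add_zero, neg_zero]
        conv_lhs => rw [hG3dec _ (hQ3range c)]
        rw [e2, map_zero]
      have hq12 : dC (Q1 c) + dC (Q2 c) = 0 := by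
        have h := congrArg (fun u => dC u) (hdecomp c)
        simp only [map_add] at h
        rw [hF1 _ (hPrange c), hc, zero_add, hq3, map_zero, add_zero] at h
        exact h
      have hkey : Q1 c + Q2 c = t * dC (Q1 c) := by
        conv_lhs => rw [hG1dec _ (hQ1range c), hG2dec _ (hQ2range c)]
        rw [add_assoc, ← map_add Zop, hq12, map_zero, add_zero]
      have hc' : c = Pop c + t * dC (Q1 c) := by
        conv_lhs => rw [← hdecomp c]
        rw [hq3, add_zero, add_assoc, hkey]
      rw [hc']
      refine AddSubgroup.add_mem _ ?_ ?_
      · exact AddSubgroup.mem_sup_left (hPrange c)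
      · refine AddSubgroup.mem_sup_right ?_
        rw [AddSubgroup.mem_map]
        exact ⟨dC (Q1 c), hdG1 _ (hQ1range c), rfl⟩
end
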